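/- arXiv:2205.07645 — 12 statements merged into one kernel-verified Lean document; each statement's English description precedes it below -/
import Mathlib

section
/- Let μ be a finite non-atomic Borel measure on [0,1], let h ∈ L¹(μ), and let f : [0,1] → ℝ satisfy f(x) = f(0) + ∫_{[0,x]} h dμ for all x ∈ [0,1]. Then for every continuously differentiable function φ : ℝ → ℝ with compact support contained in the open interval (0,1), one has −∫_0^1 φ'(x) f(x) dx = ∫_{[0,1]} φ h dμ, where the first integral is with respect to Lebesgue measure. -/
open MeasureTheory

/-- Integration by parts for the `μ`-derivative: if `μ` is a finite non-atomic Borel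
measure on `[0,1]`, `h ∈ L¹(μ)`, and `f(x) = f(0) + ∫_{[0,x]} h dμ` on `[0,1]`, then for
every `C¹` function `φ` with compact support contained in `(0,1)`,
`-∫_0^1 φ' f dλ = ∫_{[0,1]} φ h dμ`. -/
theorem stmt1 (μ : Measure ℝ) [IsFiniteMeasure μ] [NullSingletonClass μ]
    (hsupp : μ (Set.Icc (0:ℝ) 1)ᶜ = 0)
    (h : ℝ → ℝ) (hh : Integrable h μ) (f : ℝ → ℝ)
    (hf : ∀ x ∈ Set.Icc (0:ℝ) 1, f x = f 0 + ∫ t in Set.Icc 0 x, h t ∂μ)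
    (φ : ℝ → ℝ) (hφ : ContDiff ℝ 1 φ) (hφsupp : tsupport φ ⊆ Set.Ioo 0 1) :
    -∫ x in Set.Icc (0:ℝ) 1, deriv φ x * f x =
      ∫ x in Set.Icc (0:ℝ) 1, φ x * h x ∂μ := by
  set S : Set (ℝ × ℝ) := {q : ℝ × ℝ | q.2 ≤ q.1} with hSdef
  have hSm : MeasurableSet S := measurableSet_le measurable_snd measurable_fst
  set K : ℝ × ℝ → ℝ := S.indicator (fun q => deriv φ q.1 * h q.2) with hKdef
  have hφ0 : φ 0 = 0 :=
    image_eq_zero_of_notMem_tsupport (fun hmem => lt_irrefl (0:ℝ) (hφsupp hmem).1)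
  have hφ1 : φ 1 = 0 :=
    image_eq_zero_of_notMem_tsupport (fun hmem => lt_irrefl (1:ℝ) (hφsupp hmem).2)
  have hdφcont : Continuous (deriv φ) := hφ.continuous_deriv le_rfl
  have hdint : IntegrableOn (deriv φ) (Set.Icc (0:ℝ) 1) volume :=
    hdφcont.integrableOn_Icc
  have hhint : Integrable h (μ.restrict (Set.Icc (0:ℝ) 1)) := hh.restrict
  have hKint : Integrable K
      ((volume.restrict (Set.Icc (0:ℝ) 1)).prod (μ.restrict (Set.Icc (0:ℝ) 1))) :=
    (hdint.mul_prod hhint).indicator hSm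
  have hFTC : ∀ t : ℝ, t ≤ 1 → ∫ x in Set.Icc t 1, deriv φ x = φ 1 - φ t := by
    intro t ht
    rw [MeasureTheory.integral_Icc_eq_integral_Ioc, ← intervalIntegral.integral_of_le ht]
    exact intervalIntegral.integral_deriv_eq_sub
      (fun x _ => (hφ.differentiable one_ne_zero) x) (hdφcont.intervalIntegrable t 1)
  have key : ∫ x in Set.Icc (0:ℝ) 1, deriv φ x * f x =
      ∫ x in Set.Icc (0:ℝ) 1,
        (deriv φ x * f 0 + ∫ t in Set.Icc (0:ℝ) 1, K (x, t) ∂μ) := by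
    apply setIntegral_congr_fun measurableSet_Icc
    intro x hx
    show deriv φ x * f x = deriv φ x * f 0 + ∫ t in Set.Icc (0:ℝ) 1, K (x, t) ∂μ
    have hinner : (fun t => K (x, t)) =
        (Set.Iic x).indicator (fun t => deriv φ x * h t) := by
      funext t
      by_cases ht : t ≤ x <;>
        simp [hKdef, hSdef, Set.indicator_apply, ht]
    have hset : Set.Icc (0:ℝ) 1 ∩ Set.Iic x = Set.Icc 0 x := by
      ext y
      simp only [Set.mem_inter_iff, Set.mem_Icc, Set.mem_Iic]
      constructor
      · rintro ⟨⟨h0, _⟩, h2⟩; exact ⟨h0, h2⟩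
      · rintro ⟨h0, h1⟩; exact ⟨⟨h0, h1.trans hx.2⟩, h1⟩
    have : ∫ t in Set.Icc (0:ℝ) 1, K (x, t) ∂μ =
        deriv φ x * ∫ t in Set.Icc (0:ℝ) x, h t ∂μ := by
      rw [hinner, setIntegral_indicator measurableSet_Iic, hset,
        integral_const_mul]
    rw [this, hf x hx]
    ring
  have int1 : Integrable (fun x => deriv φ x * f 0)
      (volume.restrict (Set.Icc (0:ℝ) 1)) := hdint.mul_const _
  have int2 : Integrable (fun x => ∫ t in Set.Icc (0:ℝ) 1, K (x, t) ∂μ)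
      (volume.restrict (Set.Icc (0:ℝ) 1)) := hKint.integral_prod_left
  have h1 : ∫ x in Set.Icc (0:ℝ) 1, deriv φ x * f 0 = 0 := by
    rw [integral_mul_const, hFTC 0 zero_le_one, hφ1, hφ0]
    ring
  have hswap : (∫ x in Set.Icc (0:ℝ) 1, ∫ t in Set.Icc (0:ℝ) 1, K (x, t) ∂μ) =
      ∫ t in Set.Icc (0:ℝ) 1, (∫ x in Set.Icc (0:ℝ) 1, K (x, t)) ∂μ :=
    integral_integral_swap (f := fun x t => K (x, t)) hKint
  have h3 : (∫ t in Set.Icc (0:ℝ) 1, (∫ x in Set.Icc (0:ℝ) 1, K (x, t)) ∂μ) =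
      ∫ t in Set.Icc (0:ℝ) 1, -(φ t * h t) ∂μ := by
    apply setIntegral_congr_fun measurableSet_Icc
    intro t ht
    show (∫ x in Set.Icc (0:ℝ) 1, K (x, t)) = -(φ t * h t)
    have hslice : (fun x => K (x, t)) =
        (Set.Ici t).indicator (fun x => deriv φ x * h t) := by
      funext x
      by_cases hxt : t ≤ x <;>
        simp [hKdef, hSdef, Set.indicator_apply, hxt]
    have hset : Set.Icc (0:ℝ) 1 ∩ Set.Ici t = Set.Icc t 1 := by
      ext y
      simp only [Set.mem_inter_iff, Set.mem_Icc, Set.mem_Ici]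
      constructor
      · rintro ⟨⟨_, h1⟩, h2⟩; exact ⟨h2, h1⟩
      · rintro ⟨h0, h1⟩; exact ⟨⟨ht.1.trans h0, h1⟩, h0⟩
    rw [hslice, setIntegral_indicator measurableSet_Ici, hset,
      integral_mul_const, hFTC t ht.2, hφ1]
    ring
  rw [key, integral_add int1 int2, h1, hswap, h3, integral_neg]
  ring
end

section
/- Let μ be a finite non-atomic Borel measure on [0,1], let F, G ∈ L²(μ), and let f, g : [0,1] → ℝ satisfy f(x) = f(0) + ∫_{[0,x]} F dμ and g(x) = g(0) + ∫_{[0,x]} G dμ for all x ∈ [0,1]. Then for every x ∈ [0,1], f(x)g(x) − f(0)g(0) = ∫_{[0,x]} (f·G + g·F) dμ; in particular the product fg is a μ-primitive of f·G + g·F (Leibniz rule for ∇_μ), and f(1)g(1) − f(0)g(0) = ∫_{[0,1]} f G dμ + ∫_{[0,1]} g F dμ. -/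
/-!
With `P_F t = ∫_{s ≤ t} F dν`, Fubini splits `(∫ F dν) (∫ G dν) = ∫∫ F(s) G(t)` along the
diagonal into `∫ P_F G dν` (over `s ≤ t`) and `∫ P_G F dν` (over `t < s`, which may be replaced
by `t ≤ s` because `ν` has no atoms). For `ν = μ` restricted to `[0, x]` we have
`f = f 0 + P_F` and `g = g 0 + P_G` there, and expanding `f x g x` gives the Leibniz rule.
Primitives are bounded by `‖F‖₁`, so every product that appears is integrable.
-/

open MeasureTheory Set

theorem norm_setIntegral_le_integral_norm {β : Type*} [MeasurableSpace β] {ν : Measure β}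
    {F : β → ℝ} (hF : Integrable F ν) (s : Set β) :
    ‖∫ t in s, F t ∂ν‖ ≤ ∫ t, ‖F t‖ ∂ν :=
  (norm_integral_le_integral_norm _).trans
    (setIntegral_le_integral hF.norm (ae_of_all _ fun _ => norm_nonneg _))

section Primitive

variable {α : Type*} [LinearOrder α] [TopologicalSpace α] [OrderClosedTopology α]
  [MeasurableSpace α] [OpensMeasurableSpace α] {F G f g : α → ℝ}

theorem ae_restrict_Icc_eq_primitive {μ : Measure α} {x y : α}
    (hf : ∀ z ∈ Icc x y, f z = f x + ∫ t in Icc x z, F t ∂μ) {z : α} (hz : z ∈ Icc x y) :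
    ∀ᵐ t ∂μ.restrict (Icc x z), f t = f x + ∫ s in Iic t, F s ∂μ.restrict (Icc x z) := by
  refine (ae_restrict_iff' measurableSet_Icc).2 (ae_of_all _ fun t ht => ?_)
  have hIic : Iic t ∩ Icc x z = Icc x t := by
    ext s
    simp only [mem_inter_iff, mem_Iic, mem_Icc]
    exact ⟨fun h => ⟨h.2.1, h.1⟩, fun h => ⟨h.2, h.1, h.2.trans ht.2⟩⟩
  rw [Measure.restrict_restrict measurableSet_Iic, hIic]
  exact hf t ⟨ht.1, ht.2.trans hz.2⟩

variable [SecondCountableTopology α] {ν : Measure α} {a b : ℝ}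

theorem stronglyMeasurable_setIntegral_Iic [SFinite ν] (hF : AEStronglyMeasurable F ν) :
    StronglyMeasurable fun t => ∫ s in Iic t, F s ∂ν := by
  obtain ⟨F₀, hF₀m, hF₀⟩ := hF
  have hF₀' : ∀ t, ∫ s in Iic t, F s ∂ν =
      ∫ s, {p : α × α | p.2 ≤ p.1}.indicator (fun p => F₀ p.2) (t, s) ∂ν := by
    intro t
    rw [integral_congr_ae (ae_restrict_of_ae hF₀), ← integral_indicator measurableSet_Iic]
    congr 1 with s
  simp_rw [hF₀']
  exact ((hF₀m.comp_measurable measurable_snd).indicator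
    (measurableSet_le measurable_snd measurable_fst)).integral_prod_right'

theorem MeasureTheory.Integrable.setIntegral_Iic_mul [SFinite ν] (hF : Integrable F ν)
    (hG : Integrable G ν) : Integrable (fun t => (∫ s in Iic t, F s ∂ν) * G t) ν :=
  hG.bdd_mul (stronglyMeasurable_setIntegral_Iic hF.1).aestronglyMeasurable
    (ae_of_all _ fun _ => norm_setIntegral_le_integral_norm hF _)

theorem integral_mul_integral_eq_integral_setIntegral_Iic_mul_add [SFinite ν]
    [NullSingletonClass ν] (hF : Integrable F ν) (hG : Integrable G ν) :
    (∫ s, F s ∂ν) * ∫ t, G t ∂ν =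
      ∫ t, (∫ s in Iic t, F s ∂ν) * G t ∂ν + ∫ s, (∫ t in Iic s, G t ∂ν) * F s ∂ν := by
  set H : α × α → ℝ := fun p => F p.1 * G p.2
  have hH : Integrable H (ν.prod ν) := hF.mul_prod hG
  have hle : MeasurableSet {p : α × α | p.1 ≤ p.2} :=
    measurableSet_le measurable_fst measurable_snd
  have below : ∫ p in {p : α × α | p.1 ≤ p.2}, H p ∂(ν.prod ν) =
      ∫ t, (∫ s in Iic t, F s ∂ν) * G t ∂ν := by
    rw [← integral_indicator hle, integral_prod_symm _ (hH.indicator hle)]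
    congr 1 with t
    rw [← integral_mul_const, ← integral_indicator measurableSet_Iic]
    congr 1 with s
  have above : ∫ p in {p : α × α | p.1 ≤ p.2}ᶜ, H p ∂(ν.prod ν) =
      ∫ s, (∫ t in Iic s, G t ∂ν) * F s ∂ν := by
    rw [← integral_indicator hle.compl, integral_prod _ (hH.indicator hle.compl)]
    congr 1 with s
    rw [← setIntegral_congr_set Iio_ae_eq_Iic, ← integral_mul_const,
      ← integral_indicator measurableSet_Iio]
    congr 1 with t
    by_cases h : t < s <;> simp [H, h, mul_comm]
  rw [← integral_prod_mul F G, ← integral_add_compl hle hH, below, above]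

theorem integrable_mul_of_ae_eq_primitive [SFinite ν] (hF : Integrable F ν) (hG : Integrable G ν)
    (hf : ∀ᵐ t ∂ν, f t = a + ∫ s in Iic t, F s ∂ν) :
    Integrable (fun t => f t * G t) ν :=
  ((hG.const_mul a).add (hF.setIntegral_Iic_mul hG)).congr
    (hf.mono fun t ht => by simp only [Pi.add_apply, ht, add_mul])

theorem integral_mul_of_ae_eq_primitive [SFinite ν] (hF : Integrable F ν) (hG : Integrable G ν)
    (hf : ∀ᵐ t ∂ν, f t = a + ∫ s in Iic t, F s ∂ν) :
    ∫ t, f t * G t ∂ν = a * ∫ t, G t ∂ν + ∫ t, (∫ s in Iic t, F s ∂ν) * G t ∂ν := by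
  rw [← integral_const_mul, ← integral_add (hG.const_mul a) (hF.setIntegral_Iic_mul hG)]
  exact integral_congr_ae (hf.mono fun t ht => by simp only [ht, add_mul])

theorem integral_mul_add_mul_of_ae_eq_primitive [SFinite ν] [NullSingletonClass ν]
    (hF : Integrable F ν) (hG : Integrable G ν)
    (hf : ∀ᵐ t ∂ν, f t = a + ∫ s in Iic t, F s ∂ν) (hg : ∀ᵐ t ∂ν, g t = b + ∫ s in Iic t, G s ∂ν) :
    (a + ∫ t, F t ∂ν) * (b + ∫ t, G t ∂ν) - a * b = ∫ t, (f t * G t + g t * F t) ∂ν := by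
  rw [integral_add (integrable_mul_of_ae_eq_primitive hF hG hf)
      (integrable_mul_of_ae_eq_primitive hG hF hg),
    integral_mul_of_ae_eq_primitive hF hG hf, integral_mul_of_ae_eq_primitive hG hF hg]
  linear_combination integral_mul_integral_eq_integral_setIntegral_Iic_mul_add hF hG

end Primitive

theorem stmt2_general (μ : Measure ℝ) [IsFiniteMeasure μ] [NullSingletonClass μ]
    (F G : ℝ → ℝ) (hF : MemLp F 2 μ) (hG : MemLp G 2 μ) (f g : ℝ → ℝ)
    (hf : ∀ x ∈ Set.Icc (0:ℝ) 1, f x = f 0 + ∫ t in Set.Icc 0 x, F t ∂μ)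
    (hg : ∀ x ∈ Set.Icc (0:ℝ) 1, g x = g 0 + ∫ t in Set.Icc 0 x, G t ∂μ) :
    (∀ x ∈ Set.Icc (0:ℝ) 1,
        f x * g x - f 0 * g 0 = ∫ t in Set.Icc 0 x, (f t * G t + g t * F t) ∂μ) ∧
      f 1 * g 1 - f 0 * g 0 =
        (∫ t in Set.Icc (0:ℝ) 1, f t * G t ∂μ) + ∫ t in Set.Icc (0:ℝ) 1, g t * F t ∂μ := by
  have hF₁ : Integrable F μ := hF.integrable one_le_two
  have hG₁ : Integrable G μ := hG.integrable one_le_two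
  have leibniz : ∀ x ∈ Icc (0:ℝ) 1,
      f x * g x - f 0 * g 0 = ∫ t in Icc 0 x, (f t * G t + g t * F t) ∂μ := fun x hx => by
    rw [hf x hx, hg x hx]
    exact integral_mul_add_mul_of_ae_eq_primitive hF₁.restrict hG₁.restrict
      (ae_restrict_Icc_eq_primitive hf hx) (ae_restrict_Icc_eq_primitive hg hx)
  have h₁ : (1:ℝ) ∈ Icc (0:ℝ) 1 := right_mem_Icc.2 zero_le_one
  refine ⟨leibniz, ?_⟩
  rw [leibniz 1 h₁, integral_add
    (integrable_mul_of_ae_eq_primitive hF₁.restrict hG₁.restrict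
      (ae_restrict_Icc_eq_primitive hf h₁))
    (integrable_mul_of_ae_eq_primitive hG₁.restrict hF₁.restrict
      (ae_restrict_Icc_eq_primitive hg h₁))]

/-- Leibniz rule and integration by parts for `∇_μ`: if `μ` is a finite non-atomic Borel
measure on `[0,1]`, `F, G ∈ L²(μ)`, and `f, g` are `μ`-primitives of `F`, `G`
respectively, then `fg` is a `μ`-primitive of `f·G + g·F`, and
`f(1)g(1) − f(0)g(0) = ∫ f G dμ + ∫ g F dμ`. -/
theorem stmt2 (μ : Measure ℝ) [IsFiniteMeasure μ] [NullSingletonClass μ]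
    (hsupp : μ (Set.Icc (0:ℝ) 1)ᶜ = 0)
    (F G : ℝ → ℝ) (hF : MemLp F 2 μ) (hG : MemLp G 2 μ) (f g : ℝ → ℝ)
    (hf : ∀ x ∈ Set.Icc (0:ℝ) 1, f x = f 0 + ∫ t in Set.Icc 0 x, F t ∂μ)
    (hg : ∀ x ∈ Set.Icc (0:ℝ) 1, g x = g 0 + ∫ t in Set.Icc 0 x, G t ∂μ) :
    (∀ x ∈ Set.Icc (0:ℝ) 1,
        f x * g x - f 0 * g 0 = ∫ t in Set.Icc 0 x, (f t * G t + g t * F t) ∂μ) ∧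
      f 1 * g 1 - f 0 * g 0 =
        (∫ t in Set.Icc (0:ℝ) 1, f t * G t ∂μ) + ∫ t in Set.Icc (0:ℝ) 1, g t * F t ∂μ :=
  stmt2_general μ F G hF hG f g hf hg
end

section
/- Let μ and ν be two finite non-atomic Borel measures on [0,1], let F ∈ L¹(μ) and G ∈ L¹(ν), and let f, g : [0,1] → ℝ satisfy f(x) = f(0) + ∫_{[0,x]} F dμ and g(x) = g(0) + ∫_{[0,x]} G dν for all x ∈ [0,1]. Then for every x ∈ [0,1], f(x)g(x) − f(0)g(0) = ∫_{[0,x]} F·g dμ + ∫_{[0,x]} f·G dν. -/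
open MeasureTheory

/-- Two-measure product rule: if `μ, ν` are finite non-atomic Borel measures on `[0,1]`,
`F ∈ L¹(μ)`, `G ∈ L¹(ν)`, `f` is a `μ`-primitive of `F` and `g` is a `ν`-primitive of
`G`, then `f(x)g(x) − f(0)g(0) = ∫_{[0,x]} F·g dμ + ∫_{[0,x]} f·G dν` for all `x ∈ [0,1]`. -/
theorem stmt3 (μ ν : Measure ℝ) [IsFiniteMeasure μ] [IsFiniteMeasure ν]
    [NullSingletonClass μ] [NullSingletonClass ν]
    (hμsupp : μ (Set.Icc (0:ℝ) 1)ᶜ = 0) (hνsupp : ν (Set.Icc (0:ℝ) 1)ᶜ = 0)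
    (F G : ℝ → ℝ) (hF : Integrable F μ) (hG : Integrable G ν) (f g : ℝ → ℝ)
    (hf : ∀ x ∈ Set.Icc (0:ℝ) 1, f x = f 0 + ∫ t in Set.Icc 0 x, F t ∂μ)
    (hg : ∀ x ∈ Set.Icc (0:ℝ) 1, g x = g 0 + ∫ t in Set.Icc 0 x, G t ∂ν) :
    ∀ x ∈ Set.Icc (0:ℝ) 1,
      f x * g x - f 0 * g 0 =
        (∫ t in Set.Icc 0 x, F t * g t ∂μ) + ∫ t in Set.Icc 0 x, f t * G t ∂ν := by
  intro x hx
  obtain ⟨hx0, hx1⟩ := hx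
  set I := Set.Icc (0:ℝ) x with hIdef
  have hIm : MeasurableSet I := measurableSet_Icc
  have hIsub : I ⊆ Set.Icc (0:ℝ) 1 := Set.Icc_subset_Icc le_rfl hx1
  set μ' := μ.restrict I with hμ'
  set ν' := ν.restrict I with hν'
  have hF' : Integrable F μ' := hF.restrict
  have hG' : Integrable G ν' := hG.restrict
  have hFG : Integrable (fun p : ℝ × ℝ => F p.1 * G p.2) (μ'.prod ν') :=
    hF'.mul_prod hG'
  have hSm : MeasurableSet {p : ℝ × ℝ | p.2 ≤ p.1} :=
    measurableSet_le measurable_snd measurable_fst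
  set H : ℝ × ℝ → ℝ := ({p : ℝ × ℝ | p.2 ≤ p.1}).indicator
    (fun p => F p.1 * G p.2) with hHdef
  have hH : Integrable H (μ'.prod ν') := hFG.indicator hSm
  -- f x - f s for s ∈ I
  have hfs : ∀ s ∈ I, (∫ t in Set.Icc s x, F t ∂μ) = f x - f s := by
    intro s hs
    obtain ⟨hs0, hsx⟩ := hs
    have hun : Set.Icc (0:ℝ) s ∪ Set.Ioc s x = Set.Icc 0 x :=
      Set.Icc_union_Ioc_eq_Icc hs0 hsx
    have hdisj : Disjoint (Set.Icc (0:ℝ) s) (Set.Ioc s x) := by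
      rw [Set.disjoint_left]
      rintro a ⟨_, h1⟩ ⟨h2, _⟩
      exact absurd h1 (not_le.2 h2)
    have hsplit : (∫ t in Set.Icc (0:ℝ) x, F t ∂μ)
        = (∫ t in Set.Icc (0:ℝ) s, F t ∂μ) + ∫ t in Set.Ioc s x, F t ∂μ := by
      rw [← hun, setIntegral_union hdisj measurableSet_Ioc
        hF.integrableOn hF.integrableOn]
    rw [integral_Icc_eq_integral_Ioc]
    have h1 := hf x ⟨hx0, hx1⟩
    have h2 := hf s ⟨hs0, le_trans hsx hx1⟩
    rw [h1, h2]
    linarith [hsplit]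
  -- inner integral in s
  have hinner1 : ∀ t ∈ I, (∫ s, H (t, s) ∂ν') = F t * (g t - g 0) := by
    intro t ht
    obtain ⟨ht0, htx⟩ := ht
    have h1 : (fun s => H (t, s)) = fun s => F t * (Set.Iic t).indicator G s := by
      funext s
      by_cases hst : s ≤ t
      · simp [hHdef, Set.indicator_of_mem, hst, Set.mem_Iic]
      · simp [hHdef, Set.indicator_of_notMem, hst, Set.mem_Iic]
    rw [h1, integral_const_mul, integral_indicator measurableSet_Iic,
      hν', Measure.restrict_restrict measurableSet_Iic]
    have h2 : Set.Iic t ∩ I = Set.Icc 0 t := by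
      ext s
      simp only [Set.mem_inter_iff, Set.mem_Iic, Set.mem_Icc, hIdef]
      constructor
      · rintro ⟨h1, h2, h3⟩; exact ⟨h2, h1⟩
      · rintro ⟨h1, h2⟩; exact ⟨h2, h1, le_trans h2 htx⟩
    rw [h2]
    have := hg t ⟨ht0, le_trans htx hx1⟩
    rw [this]; ring
  -- inner integral in t
  have hinner2 : ∀ s ∈ I, (∫ t, H (t, s) ∂μ') = G s * (f x - f s) := by
    intro s hs
    obtain ⟨hs0, hsx⟩ := hs
    have h1 : (fun t => H (t, s)) = fun t => ((Set.Ici s).indicator F t) * G s := by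
      funext t
      by_cases hst : s ≤ t
      · simp [hHdef, Set.indicator_of_mem, hst, Set.mem_Ici]
      · simp [hHdef, Set.indicator_of_notMem, hst, Set.mem_Ici]
    rw [h1, integral_mul_const, integral_indicator measurableSet_Ici,
      hμ', Measure.restrict_restrict measurableSet_Ici]
    have h2 : Set.Ici s ∩ I = Set.Icc s x := by
      ext t
      simp only [Set.mem_inter_iff, Set.mem_Ici, Set.mem_Icc, hIdef]
      constructor
      · rintro ⟨h1, h2, h3⟩; exact ⟨h1, h3⟩
      · rintro ⟨h1, h2⟩; exact ⟨h1, le_trans hs0 h1, h2⟩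
    rw [h2, hfs s ⟨hs0, hsx⟩]; ring
  -- Fubini
  have hswap : (∫ t, ∫ s, H (t, s) ∂ν' ∂μ') = ∫ s, ∫ t, H (t, s) ∂μ' ∂ν' :=
    integral_integral_swap hH
  -- integrability of F * g on I
  have hM : Integrable (fun t => ∫ s, H (t, s) ∂ν') μ' := hH.integral_prod_left
  have haeμ : ∀ᵐ t ∂μ', (∫ s, H (t, s) ∂ν') = F t * (g t - g 0) :=
    (ae_restrict_iff' hIm).2 (ae_of_all _ hinner1)
  have hFg' : Integrable (fun t => F t * (g t - g 0)) μ' := hM.congr haeμ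
  have hFg : Integrable (fun t => F t * g t) μ' := by
    have := hFg'.add (hF'.mul_const (g 0))
    refine this.congr (ae_of_all _ fun t => ?_)
    simp only [Pi.add_apply, Pi.sub_apply]; ring
  -- integrability of f * G on I
  have hN : Integrable (fun s => ∫ t, H (t, s) ∂μ') ν' := hH.integral_prod_right
  have haeν : ∀ᵐ s ∂ν', (∫ t, H (t, s) ∂μ') = G s * (f x - f s) :=
    (ae_restrict_iff' hIm).2 (ae_of_all _ hinner2)
  have hfG' : Integrable (fun s => G s * (f x - f s)) ν' := hN.congr haeν
  have hfG : Integrable (fun s => f s * G s) ν' := by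
    have := (hG'.mul_const (f x)).sub hfG'
    refine this.congr (ae_of_all _ fun s => ?_)
    simp only [Pi.add_apply, Pi.sub_apply]; ring
  -- evaluate both iterated integrals
  have hFint : (∫ t in I, F t ∂μ) = f x - f 0 := by
    have := hf x ⟨hx0, hx1⟩; rw [this]; ring
  have hGint : (∫ s in I, G s ∂ν) = g x - g 0 := by
    have := hg x ⟨hx0, hx1⟩; rw [this]; ring
  have e1 : (∫ t, ∫ s, H (t, s) ∂ν' ∂μ')
      = (∫ t in I, F t * g t ∂μ) - g 0 * (f x - f 0) := by
    rw [integral_congr_ae haeμ]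
    have : (∫ t, F t * (g t - g 0) ∂μ')
        = (∫ t, F t * g t ∂μ') - ∫ t, F t * g 0 ∂μ' := by
      rw [← integral_sub hFg (hF'.mul_const (g 0))]
      congr 1; funext t; ring
    rw [this]
    have h3 : (∫ t, F t * g 0 ∂μ') = g 0 * (f x - f 0) := by
      rw [integral_mul_const, hμ', hFint]; ring
    rw [h3]
  have e2 : (∫ s, ∫ t, H (t, s) ∂μ' ∂ν')
      = f x * (g x - g 0) - ∫ s in I, f s * G s ∂ν := by
    rw [integral_congr_ae haeν]
    have : (∫ s, G s * (f x - f s) ∂ν')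
        = (∫ s, G s * f x ∂ν') - ∫ s, f s * G s ∂ν' := by
      rw [← integral_sub (hG'.mul_const (f x)) hfG]
      congr 1; funext s; ring
    rw [this]
    have h3 : (∫ s, G s * f x ∂ν') = f x * (g x - g 0) := by
      rw [integral_mul_const, hν', hGint]; ring
    rw [h3]
  have key : (∫ t in I, F t * g t ∂μ) - g 0 * (f x - f 0)
      = f x * (g x - g 0) - ∫ s in I, f s * G s ∂ν := by
    rw [← e1, ← e2]; exact hswap
  linear_combination -key
end

section
/- Let μ be a finite non-atomic Borel measure on [0,1], let F, G ∈ L²(μ; ℂ), and let f, g : [0,1] → ℂ satisfy f(x) = f(0) + ∫_{[0,x]} F dμ and g(x) = g(0) + ∫_{[0,x]} G dμ for all x ∈ [0,1]. Then ∫_{[0,1]} conj(F) g dμ + ∫_{[0,1]} conj(f) G dμ = conj(f(1)) g(1) − conj(f(0)) g(0). Consequently, if α ∈ ℂ with |α| = 1 and the boundary conditions f(1) = α f(0) and g(1) = α g(0) hold, then ⟨∇_μ f, g⟩_{L²(μ)} + ⟨f, ∇_μ g⟩_{L²(μ)} = 0; that is, the operator ∇_μ with domain restricted by the boundary condition f(1)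 = α f(0) is skew-symmetric in L²(μ). -/
open MeasureTheory Complex

/-- The diagonal is null for the self-product of a non-atomic measure. -/
lemma diag_null (ν : Measure ℝ) [SFinite ν] [NullSingletonClass ν] :
    (ν.prod ν) {p : ℝ × ℝ | p.1 = p.2} = 0 := by
  rw [Measure.prod_apply (measurableSet_eq_fun measurable_fst measurable_snd)]
  have : ∀ x : ℝ, ν (Prod.mk x ⁻¹' {p : ℝ × ℝ | p.1 = p.2}) = 0 := by
    intro x
    have : Prod.mk x ⁻¹' {p : ℝ × ℝ | p.1 = p.2} = {x} := by
      ext y; simp [eq_comm]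
    rw [this]; exact measure_singleton x
  simp [this]

/-- Key double-integral identity (abstract integration by parts). -/
lemma key (ν : Measure ℝ) [IsFiniteMeasure ν] [NullSingletonClass ν] (Φ G : ℝ → ℂ)
    (hΦ : Integrable Φ ν) (hG : Integrable G ν) :
    (∫ t, Φ t * ∫ s, (Set.Iic t).indicator G s ∂ν ∂ν) +
      (∫ t, (∫ s, (Set.Iic t).indicator Φ s ∂ν) * G t ∂ν) =
    (∫ t, Φ t ∂ν) * (∫ t, G t ∂ν) := by
  set k : ℝ × ℝ → ℂ := {p : ℝ × ℝ | p.2 ≤ p.1}.indicator (fun p => Φ p.1 * G p.2) with hk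
  set k' : ℝ × ℝ → ℂ := {p : ℝ × ℝ | p.1 ≤ p.2}.indicator (fun p => Φ p.1 * G p.2) with hk'
  have hmk : MeasurableSet {p : ℝ × ℝ | p.2 ≤ p.1} := measurableSet_le measurable_snd measurable_fst
  have hmk' : MeasurableSet {p : ℝ × ℝ | p.1 ≤ p.2} := measurableSet_le measurable_fst measurable_snd
  have hki : Integrable k (ν.prod ν) := (hΦ.mul_prod hG).indicator hmk
  have hk'i : Integrable k' (ν.prod ν) := (hΦ.mul_prod hG).indicator hmk'
  have e1 : (∫ t, Φ t * ∫ s, (Set.Iic t).indicator G s ∂ν ∂ν) = ∫ p, k p ∂(ν.prod ν) := by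
    have := integral_integral (μ := ν) (ν := ν) (f := fun t s => k (t, s)) hki
    rw [show (∫ z : ℝ × ℝ, k (z.1, z.2) ∂ν.prod ν) = ∫ p, k p ∂ν.prod ν from rfl] at this
    rw [← this]
    congr 1; ext t
    rw [← integral_const_mul]
    congr 1; ext s
    by_cases h : s ≤ t <;> simp [hk, Set.indicator_apply, h]
  have e2 : (∫ t, (∫ s, (Set.Iic t).indicator Φ s ∂ν) * G t ∂ν) = ∫ p, k' p ∂(ν.prod ν) := by
    have : ∀ t, (∫ s, (Set.Iic t).indicator Φ s ∂ν) * G t = ∫ s, k' (s, t) ∂ν := by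
      intro t
      rw [← integral_mul_const]
      congr 1; ext s
      by_cases h : s ≤ t <;> simp [hk', Set.indicator, h]
    simp_rw [this]
    have h2 := integral_integral (μ := ν) (ν := ν) (f := fun s t => k' (s, t)) hk'i
    have h3 := integral_integral_swap (μ := ν) (ν := ν) (f := fun s t => k' (s, t)) hk'i
    rw [show (∫ z : ℝ × ℝ, k' (z.1, z.2) ∂ν.prod ν) = ∫ p, k' p ∂ν.prod ν from rfl] at h2
    rw [← h3, h2]
  rw [e1, e2, ← integral_add hki hk'i, ← integral_prod_mul]
  apply integral_congr_ae
  have hd : (ν.prod ν) {p : ℝ × ℝ | p.1 = p.2} = 0 := diag_null ν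
  filter_upwards [measure_eq_zero_iff_ae_notMem.mp hd] with p hp
  have hne : p.1 ≠ p.2 := hp
  rcases lt_or_gt_of_ne hne with h | h
  · simp [hk, hk', Set.indicator_apply, not_le.mpr h, h.le]
  · simp [hk, hk', Set.indicator_apply, not_le.mpr h, h.le]

/-- Skew-symmetry of `∇_μ` under the boundary condition `f(1) = α f(0)`, `|α| = 1`:
for `μ`-primitives `f, g` of `F, G ∈ L²(μ; ℂ)` one has
`∫ conj F · g dμ + ∫ conj f · G dμ = conj (f 1) * g 1 − conj (f 0) * g 0`, and under the
boundary conditions `f(1) = α f(0)`, `g(1) = α g(0)` with `|α| = 1` this quantity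
vanishes, i.e. `⟨∇_μ f, g⟩ + ⟨f, ∇_μ g⟩ = 0`. -/
theorem stmt4 (μ : Measure ℝ) [IsFiniteMeasure μ] [NullSingletonClass μ]
    (hsupp : μ (Set.Icc (0:ℝ) 1)ᶜ = 0)
    (F G : ℝ → ℂ) (hF : MemLp F 2 μ) (hG : MemLp G 2 μ) (f g : ℝ → ℂ)
    (hf : ∀ x ∈ Set.Icc (0:ℝ) 1, f x = f 0 + ∫ t in Set.Icc 0 x, F t ∂μ)
    (hg : ∀ x ∈ Set.Icc (0:ℝ) 1, g x = g 0 + ∫ t in Set.Icc 0 x, G t ∂μ) :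
    (∫ t in Set.Icc (0:ℝ) 1, (starRingEnd ℂ) (F t) * g t ∂μ) +
        (∫ t in Set.Icc (0:ℝ) 1, (starRingEnd ℂ) (f t) * G t ∂μ) =
      (starRingEnd ℂ) (f 1) * g 1 - (starRingEnd ℂ) (f 0) * g 0 ∧
    ∀ α : ℂ, ‖α‖ = 1 → f 1 = α * f 0 → g 1 = α * g 0 →
      (∫ t in Set.Icc (0:ℝ) 1, (starRingEnd ℂ) (F t) * g t ∂μ) +
          (∫ t in Set.Icc (0:ℝ) 1, (starRingEnd ℂ) (f t) * G t ∂μ) = 0 := by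
  have hI : MeasurableSet (Set.Icc (0:ℝ) 1) := measurableSet_Icc
  set ν := μ.restrict (Set.Icc (0:ℝ) 1) with hνdef
  set Φ : ℝ → ℂ := fun t => (starRingEnd ℂ) (F t) with hΦdef
  have hFi : Integrable F ν := (hF.integrable one_le_two).restrict
  have hGi : Integrable G ν := (hG.integrable one_le_two).restrict
  have hΦi : Integrable Φ ν := by
    refine ⟨RCLike.continuous_conj.comp_aestronglyMeasurable hFi.1, ?_⟩
    simpa [HasFiniteIntegral, hΦdef] using hFi.2
  -- inner integral rewriting
  have hinner : ∀ (H : ℝ → ℂ), ∀ t ∈ Set.Icc (0:ℝ) 1,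
      (∫ s in Set.Icc 0 t, H s ∂μ) = ∫ s, (Set.Iic t).indicator H s ∂ν := by
    intro H t ht
    have hset : Set.Iic t ∩ Set.Icc (0:ℝ) 1 = Set.Icc 0 t := by
      ext x
      simp only [Set.mem_inter_iff, Set.mem_Iic, Set.mem_Icc]
      constructor
      · rintro ⟨h1, h2, _⟩; exact ⟨h2, h1⟩
      · rintro ⟨h1, h2⟩; exact ⟨h2, h1, h2.trans ht.2⟩
    rw [integral_indicator measurableSet_Iic, hνdef,
      Measure.restrict_restrict measurableSet_Iic, hset]
  -- product kernels
  set k : ℝ × ℝ → ℂ := {p : ℝ × ℝ | p.2 ≤ p.1}.indicator (fun p => Φ p.1 * G p.2) with hk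
  set k' : ℝ × ℝ → ℂ := {p : ℝ × ℝ | p.1 ≤ p.2}.indicator (fun p => Φ p.1 * G p.2) with hk'
  have hki : Integrable k (ν.prod ν) :=
    (hΦi.mul_prod hGi).indicator (measurableSet_le measurable_snd measurable_fst)
  have hk'i : Integrable k' (ν.prod ν) :=
    (hΦi.mul_prod hGi).indicator (measurableSet_le measurable_fst measurable_snd)
  have hpt1 : ∀ t, Φ t * (∫ s, (Set.Iic t).indicator G s ∂ν) = ∫ s, k (t, s) ∂ν := by
    intro t
    rw [← integral_const_mul]
    congr 1; ext s
    by_cases h : s ≤ t <;> simp [hk, Set.indicator_apply, h]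
  have hpt2 : ∀ t, (∫ s, (Set.Iic t).indicator Φ s ∂ν) * G t = ∫ s, k' (s, t) ∂ν := by
    intro t
    rw [← integral_mul_const]
    congr 1; ext s
    by_cases h : s ≤ t <;> simp [hk', Set.indicator_apply, h]
  have hint1 : Integrable (fun t => Φ t * ∫ s, (Set.Iic t).indicator G s ∂ν) ν :=
    hki.integral_prod_left.congr (Filter.Eventually.of_forall fun t => (hpt1 t).symm)
  have hint2 : Integrable (fun t => (∫ s, (Set.Iic t).indicator Φ s ∂ν) * G t) ν :=
    hk'i.integral_prod_right.congr (Filter.Eventually.of_forall fun t => (hpt2 t).symm)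
  -- rewrite the two main integrals
  have T1 : (∫ t in Set.Icc (0:ℝ) 1, (starRingEnd ℂ) (F t) * g t ∂μ)
      = (∫ t, Φ t ∂ν) * g 0 + ∫ t, Φ t * ∫ s, (Set.Iic t).indicator G s ∂ν ∂ν := by
    rw [← integral_mul_const, ← integral_add (hΦi.mul_const _) hint1]
    apply integral_congr_ae
    filter_upwards [ae_restrict_mem hI] with t ht
    rw [hg t ht, hinner G t ht]
    ring
  have T2 : (∫ t in Set.Icc (0:ℝ) 1, (starRingEnd ℂ) (f t) * G t ∂μ)
      = (starRingEnd ℂ) (f 0) * (∫ t, G t ∂ν)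
        + ∫ t, (∫ s, (Set.Iic t).indicator Φ s ∂ν) * G t ∂ν := by
    rw [← integral_const_mul, ← integral_add (hGi.const_mul _) hint2]
    apply integral_congr_ae
    filter_upwards [ae_restrict_mem hI] with t ht
    have : (starRingEnd ℂ) (f t)
        = (starRingEnd ℂ) (f 0) + ∫ s, (Set.Iic t).indicator Φ s ∂ν := by
      rw [hf t ht, map_add, ← hinner Φ t ht, ← integral_conj]
    rw [this]
    ring
  have hkey := key ν Φ G hΦi hGi
  have hΦint : (∫ t, Φ t ∂ν) = (starRingEnd ℂ) (f 1 - f 0) := by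
    rw [show (∫ t, Φ t ∂ν) = (starRingEnd ℂ) (∫ t, F t ∂ν) from integral_conj]
    congr 1
    rw [hf 1 (by norm_num)]
    ring
  have hGint : (∫ t, G t ∂ν) = g 1 - g 0 := by
    have := hg 1 (by norm_num)
    rw [this]; ring
  have main : (∫ t in Set.Icc (0:ℝ) 1, (starRingEnd ℂ) (F t) * g t ∂μ) +
        (∫ t in Set.Icc (0:ℝ) 1, (starRingEnd ℂ) (f t) * G t ∂μ) =
      (starRingEnd ℂ) (f 1) * g 1 - (starRingEnd ℂ) (f 0) * g 0 := by
    rw [T1, T2]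
    have : (∫ t, Φ t ∂ν) * g 0 + (∫ t, Φ t * ∫ s, (Set.Iic t).indicator G s ∂ν ∂ν)
        + ((starRingEnd ℂ) (f 0) * (∫ t, G t ∂ν)
          + ∫ t, (∫ s, (Set.Iic t).indicator Φ s ∂ν) * G t ∂ν)
        = (∫ t, Φ t ∂ν) * g 0 + (starRingEnd ℂ) (f 0) * (∫ t, G t ∂ν)
          + (∫ t, Φ t ∂ν) * (∫ t, G t ∂ν) := by
      rw [← hkey]; ring
    rw [this, hΦint, hGint, map_sub]
    ring
  refine ⟨main, fun α hα hfα hgα => ?_⟩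
  rw [main, hfα, hgα, map_mul]
  have hα1 : (starRingEnd ℂ) α * α = 1 := by
    rw [mul_comm, Complex.mul_conj, ← Complex.sq_norm, hα]
    norm_num
  linear_combination ((starRingEnd ℂ) (f 0) * g 0) * hα1
end

section
/- Let μ be a finite non-atomic Borel measure on [0,1]. Fix x ∈ [0,1] and define v_x : [0,1] → ℝ by v_x(y) = μ([0, min(x,y)]). Then v_x is a μ-primitive of the indicator function χ_{[0,x]}, i.e. v_x(y) = ∫_{[0,y]} χ_{[0,x]} dμ for all y; and for every continuously differentiable function F : ℝ → ℝ, one has F(v_x(y)) − F(v_x(0)) = ∫_{[0,y]} F'(v_x(s)) χ_{[0,x]}(s) dμ(s) for all y ∈ [0,1]. In particular, F(v_x) is a μ-primitive of F'(v_x)·χ_{[0,x]}. -/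
open MeasureTheory Set

section aux

variable (μ : Measure ℝ) [IsFiniteMeasure μ] [NullSingletonClass μ]

lemma gmono : Monotone (fun s : ℝ => (μ (Set.Icc 0 s)).toReal) := fun a b hab =>
  ENNReal.toReal_mono (measure_ne_top _ _) (measure_mono (Icc_subset_Icc le_rfl hab))

lemma gcont : Continuous (fun s : ℝ => (μ (Set.Icc 0 s)).toReal) := by
  rw [continuous_iff_continuousAt]
  intro a
  rw [ContinuousAt, tendsto_iff_dist_tendsto_zero]
  have step : ∀ b c : ℝ, b ≤ c →
      (μ (Set.Icc 0 c)).toReal ≤ (μ (Set.Icc 0 b)).toReal + (μ (Set.Icc b c)).toReal := by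
    intro b c hbc
    have h1 : μ (Set.Icc 0 c) ≤ μ (Set.Icc 0 b) + μ (Set.Icc b c) := by
      refine le_trans (measure_mono ?_) (measure_union_le _ _)
      intro z hz
      rcases le_total z b with h | h
      · exact Or.inl ⟨hz.1, h⟩
      · exact Or.inr ⟨h, hz.2⟩
    calc (μ (Set.Icc 0 c)).toReal ≤ (μ (Set.Icc 0 b) + μ (Set.Icc b c)).toReal :=
          ENNReal.toReal_mono (by finiteness) h1
      _ = (μ (Set.Icc 0 b)).toReal + (μ (Set.Icc b c)).toReal :=
          ENNReal.toReal_add (measure_ne_top _ _) (measure_ne_top _ _)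
  have key : ∀ s : ℝ, dist ((μ (Set.Icc 0 s)).toReal) ((μ (Set.Icc 0 a)).toReal)
      ≤ (μ (Set.Icc (a - |s - a|) (a + |s - a|))).toReal := by
    intro s
    rw [Real.dist_eq]
    rw [abs_le]
    rcases le_total s a with h | h
    · have habs : |s - a| = a - s := by rw [abs_of_nonpos (by linarith)]; ring
      constructor
      · have := step s a h
        have hmono : (μ (Set.Icc s a)).toReal
            ≤ (μ (Set.Icc (a - |s - a|) (a + |s - a|))).toReal := by
          apply ENNReal.toReal_mono (measure_ne_top _ _)
          apply measure_mono (Icc_subset_Icc (by rw [habs]; linarith) (le_add_of_nonneg_right (abs_nonneg _)))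
        linarith
      · have := gmono μ h
        simp only at this
        have : (μ (Set.Icc 0 s)).toReal - (μ (Set.Icc 0 a)).toReal ≤ 0 := by linarith
        exact this.trans ENNReal.toReal_nonneg
    · have habs : |s - a| = s - a := abs_of_nonneg (by linarith)
      constructor
      · have := gmono μ h
        simp only at this
        have h0 : (0:ℝ) ≤ (μ (Set.Icc (a - |s - a|) (a + |s - a|))).toReal :=
          ENNReal.toReal_nonneg
        linarith
      · have := step a s h
        have hmono : (μ (Set.Icc a s)).toReal
            ≤ (μ (Set.Icc (a - |s - a|) (a + |s - a|))).toReal := by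
          apply ENNReal.toReal_mono (measure_ne_top _ _)
          apply measure_mono (Icc_subset_Icc (sub_le_self _ (abs_nonneg _)) (by rw [habs]; linarith))
        linarith
  have hδ : Filter.Tendsto (fun s : ℝ => |s - a|) (nhds a) (nhds 0) := by
    have : Filter.Tendsto (fun s : ℝ => |s - a|) (nhds a) (nhds (|a - a|)) :=
      ((continuous_id.sub continuous_const).abs).tendsto a
    simpa using this
  have hμ : Filter.Tendsto (fun δ : ℝ => μ (Set.Icc (a - δ) (a + δ))) (nhds 0) (nhds 0) :=
    tendsto_measure_Icc μ a
  have hcomp : Filter.Tendsto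
      (fun s : ℝ => (μ (Set.Icc (a - |s - a|) (a + |s - a|))).toReal) (nhds a) (nhds 0) := by
    have := (ENNReal.tendsto_toReal (by simp)).comp (hμ.comp hδ)
    exact this
  exact squeeze_zero (fun s => dist_nonneg) key hcomp

lemma gmeas : Measurable (fun s : ℝ => (μ (Set.Icc 0 s)).toReal) := (gcont μ).measurable

lemma gmap (m : ℝ) (hm : 0 ≤ m) :
    Measure.map (fun s : ℝ => (μ (Set.Icc 0 s)).toReal) (μ.restrict (Set.Icc 0 m))
      = volume.restrict (Set.Icc 0 ((μ (Set.Icc 0 m)).toReal)) := by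
  set g : ℝ → ℝ := fun s => (μ (Set.Icc 0 s)).toReal with hg
  have hg0 : g 0 = 0 := by simp [hg, Set.Icc_self]
  have hfin : IsFiniteMeasure (Measure.map g (μ.restrict (Set.Icc 0 m))) := by
    constructor
    rw [Measure.map_apply (gmeas μ) MeasurableSet.univ]
    exact lt_of_le_of_lt (measure_mono (Set.subset_univ _)) (measure_lt_top _ _)
  refine Measure.ext_of_Iic _ _ (fun t => ?_)
  rw [Measure.map_apply (gmeas μ) measurableSet_Iic, Measure.restrict_apply
    ((gmeas μ) measurableSet_Iic), Measure.restrict_apply measurableSet_Iic]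
  rcases lt_or_ge t 0 with ht | ht
  · have h1 : g ⁻¹' Set.Iic t ∩ Set.Icc 0 m = ∅ := by
      apply Set.eq_empty_iff_forall_notMem.mpr
      intro z hz
      have h0 : (0:ℝ) ≤ g z := ENNReal.toReal_nonneg
      have hzt : g z ≤ t := hz.1
      linarith
    have h2 : Set.Iic t ∩ Set.Icc 0 (g m) = ∅ := by
      apply Set.eq_empty_iff_forall_notMem.mpr
      intro z hz
      have h0 : (0:ℝ) ≤ z := hz.2.1
      have hzt : z ≤ t := hz.1
      linarith
    rw [h1, h2]
    simp
  rcases le_or_gt (g m) t with htm | htm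
  · have h1 : g ⁻¹' Set.Iic t ∩ Set.Icc 0 m = Set.Icc 0 m := by
      apply Set.inter_eq_self_of_subset_right
      intro z hz
      exact le_trans (gmono μ hz.2) htm
    have h2 : Set.Iic t ∩ Set.Icc 0 (g m) = Set.Icc 0 (g m) := by
      apply Set.inter_eq_self_of_subset_right
      intro z hz
      exact hz.2.trans htm
    rw [h1, h2, Real.volume_Icc]
    rw [hg, ENNReal.ofReal_sub _ le_rfl]
    simp [ENNReal.ofReal_toReal (measure_ne_top μ _)]
  · -- 0 ≤ t < g m
    have hmemt : t ∈ Set.Icc (g 0) (g m) := ⟨by rw [hg0]; exact ht, htm.le⟩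
    obtain ⟨s₀, hs₀mem, hs₀⟩ := intermediate_value_Icc hm ((gcont μ).continuousOn) hmemt
    set A : Set ℝ := g ⁻¹' Set.Iic t ∩ Set.Icc 0 m with hA
    have hAne : A.Nonempty :=
      ⟨s₀, ⟨by simp only [Set.mem_preimage, Set.mem_Iic]; exact le_of_eq hs₀, hs₀mem⟩⟩
    have hAbdd : BddAbove A := ⟨m, fun z hz => hz.2.2⟩
    have hAclosed : IsClosed A := ((isClosed_Iic.preimage (gcont μ)).inter isClosed_Icc)
    set s₂ := sSup A with hs₂
    have hs₂mem : s₂ ∈ A := hAclosed.csSup_mem hAne hAbdd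
    have hsub1 : Set.Icc 0 s₀ ⊆ A := by
      intro z hz
      exact ⟨by simp only [Set.mem_preimage, Set.mem_Iic]; rw [← hs₀]; exact gmono μ hz.2,
        hz.1, hz.2.trans hs₀mem.2⟩
    have hsub2 : A ⊆ Set.Icc 0 s₂ := fun z hz => ⟨hz.2.1, le_csSup hAbdd hz⟩
    have hlow : ENNReal.ofReal t ≤ μ A := by
      have : μ (Set.Icc 0 s₀) = ENNReal.ofReal t := by
        rw [← hs₀]
        exact (ENNReal.ofReal_toReal (measure_ne_top μ _)).symm
      exact this ▸ measure_mono hsub1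
    have hhigh : μ A ≤ ENNReal.ofReal t := by
      refine le_trans (measure_mono hsub2) ?_
      have : g s₂ ≤ t := hs₂mem.1
      calc μ (Set.Icc 0 s₂) = ENNReal.ofReal (g s₂) :=
            (ENNReal.ofReal_toReal (measure_ne_top μ _)).symm
        _ ≤ ENNReal.ofReal t := ENNReal.ofReal_le_ofReal this
    have hAm : μ A = ENNReal.ofReal t := le_antisymm hhigh hlow
    have h2 : Set.Iic t ∩ Set.Icc 0 (g m) = Set.Icc 0 t := by
      ext z
      simp only [Set.mem_inter_iff, Set.mem_Iic, Set.mem_Icc]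
      constructor
      · rintro ⟨h1, h2, _⟩; exact ⟨h2, h1⟩
      · rintro ⟨h1, h2⟩; exact ⟨h2, h1, h2.trans htm.le⟩
    show μ A = volume (Set.Iic t ∩ Set.Icc 0 (g m))
    rw [hAm, h2, Real.volume_Icc]
    simp

end aux

/-- For `v_x(y) = μ([0, min(x,y)])`: `v_x` is a `μ`-primitive of the indicator
`χ_{[0,x]}`, and for every `C¹` function `F`, `F(v_x)` is a `μ`-primitive of
`F'(v_x) · χ_{[0,x]}`. -/
theorem stmt5 (μ : Measure ℝ) [IsFiniteMeasure μ] [NullSingletonClass μ]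
    (hsupp : μ (Set.Icc (0:ℝ) 1)ᶜ = 0)
    (x : ℝ) (hx : x ∈ Set.Icc (0:ℝ) 1) (v : ℝ → ℝ)
    (hv : ∀ y : ℝ, v y = (μ (Set.Icc 0 (min x y))).toReal) :
    (∀ y ∈ Set.Icc (0:ℝ) 1,
        v y = ∫ s in Set.Icc 0 y, (Set.Icc (0:ℝ) x).indicator (fun _ => (1:ℝ)) s ∂μ) ∧
      ∀ F : ℝ → ℝ, ContDiff ℝ 1 F → ∀ y ∈ Set.Icc (0:ℝ) 1,
        F (v y) - F (v 0) =
          ∫ s in Set.Icc 0 y,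
            deriv F (v s) * (Set.Icc (0:ℝ) x).indicator (fun _ => (1:ℝ)) s ∂μ := by
  have hinter : ∀ y : ℝ, Set.Icc (0:ℝ) x ∩ Set.Icc (0:ℝ) y = Set.Icc 0 (min x y) := by
    intro y
    rw [Set.Icc_inter_Icc]
    simp
  constructor
  · intro y hy
    rw [integral_indicator_const (1:ℝ) measurableSet_Icc, measureReal_restrict_apply measurableSet_Icc,
      hinter, smul_eq_mul, mul_one, hv, Measure.real]
  · intro F hF y hy
    set g : ℝ → ℝ := fun s => (μ (Set.Icc 0 s)).toReal with hgdef
    set m := min x y with hm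
    have hm0 : 0 ≤ m := le_min hx.1 hy.1
    have hv0 : v 0 = 0 := by
      rw [hv]
      simp [min_eq_right hx.1, Set.Icc_self]
    have hvy : v y = g m := by rw [hv]
    have hvs : ∀ s ∈ Set.Icc 0 m, v s = g s := by
      intro s hs
      rw [hv]
      simp [hgdef, min_eq_right (hs.2.trans (min_le_left x y))]
    have hderivcont : Continuous (deriv F) := hF.continuous_deriv le_rfl
    -- step c: reduce RHS to integral over Icc 0 m
    have hstep1 : (fun s => deriv F (v s) * (Set.Icc (0:ℝ) x).indicator (fun _ => (1:ℝ)) s)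
        = (Set.Icc (0:ℝ) x).indicator (fun s => deriv F (v s)) := by
      ext s
      by_cases hs : s ∈ Set.Icc (0:ℝ) x <;> simp [Set.indicator_apply, hs]
    rw [hstep1, integral_indicator measurableSet_Icc, Measure.restrict_restrict measurableSet_Icc,
      hinter, ← hm]
    have hstep2 : ∫ s in Set.Icc 0 m, deriv F (v s) ∂μ = ∫ s in Set.Icc 0 m, deriv F (g s) ∂μ :=
      setIntegral_congr_fun measurableSet_Icc (fun s hs => by rw [hvs s hs])
    rw [hstep2]
    have hstep3 : ∫ s in Set.Icc 0 m, deriv F (g s) ∂μ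
        = ∫ t in Set.Icc 0 (g m), deriv F t := by
      rw [← gmap μ m hm0]
      exact (integral_map (gmeas μ).aemeasurable hderivcont.aestronglyMeasurable).symm
    rw [hstep3]
    have hgm0 : 0 ≤ g m := ENNReal.toReal_nonneg
    rw [MeasureTheory.integral_Icc_eq_integral_Ioc, ← intervalIntegral.integral_of_le hgm0]
    rw [intervalIntegral.integral_deriv_eq_sub
      (fun z _ => (hF.differentiable one_ne_zero).differentiableAt)
      (hderivcont.intervalIntegrable _ _)]
    rw [hvy, hv0]
end

section
/- Let μ be a finite non-atomic Borel measure on [0,1], let g(x) = μ([0,x]) be its cumulative distribution function, and let λ be a nonzero real number. Then the function f(x) = exp(i λ g(x)) satisfies f(x) − f(0) = i λ ∫_{[0,x]} f dμ for every x ∈ [0,1]; equivalently, ∫_{[0,x]} exp(i λ g(s)) dμ(s) = (exp(i λ g(x)) − 1)/(i λ). In particular, exp(i λ g(·)) is an eigenfunction of the operator ∇_μ with eigenvalue i λ. -/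
open MeasureTheory Complex

private lemma stmt6_cont (μ : Measure ℝ) [IsFiniteMeasure μ] [NullSingletonClass μ]
    (g : ℝ → ℝ) (hg : ∀ x : ℝ, g x = (μ (Set.Icc 0 x)).toReal) : Continuous g := by
  open Set Topology in
  have hmono : Monotone g := fun a b hab => by
    rw [hg, hg]
    exact ENNReal.toReal_mono (measure_ne_top μ _) (measure_mono (Icc_subset_Icc le_rfl hab))
  rw [Metric.continuous_iff]
  intro c ε hε
  have ht := tendsto_measure_Icc μ c
  have h2 : ∀ᶠ δ in 𝓝 (0:ℝ), μ (Icc (c - δ) (c + δ)) < ENNReal.ofReal ε :=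
    ht.eventually_lt_const (by simpa using ENNReal.ofReal_pos.mpr hε)
  obtain ⟨δ, hδpos, hδ⟩ := Metric.eventually_nhds_iff.mp h2
  refine ⟨δ/2, by linarith, fun s hs => ?_⟩
  have hδ2 : μ (Icc (c - δ/2) (c + δ/2)) < ENNReal.ofReal ε := by
    apply hδ; rw [Real.dist_eq, sub_zero, abs_of_pos (by linarith)]; linarith
  have key : ∀ a b : ℝ, a ≤ b → b ∈ Icc (c - δ/2) (c + δ/2) → a ∈ Icc (c - δ/2) (c + δ/2) →
      g b - g a < ε := by
    intro a b hab hb ha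
    have hsub : Icc (0:ℝ) b ⊆ Icc 0 a ∪ Icc (c - δ/2) (c + δ/2) := by
      intro u hu
      rcases le_or_gt u a with h | h
      · exact Or.inl ⟨hu.1, h⟩
      · exact Or.inr ⟨le_trans ha.1 h.le, le_trans hu.2 hb.2⟩
    have : μ (Icc 0 b) ≤ μ (Icc 0 a) + μ (Icc (c - δ/2) (c + δ/2)) :=
      le_trans (measure_mono hsub) (measure_union_le _ _)
    rw [hg, hg]
    have h1 := ENNReal.toReal_mono (by finiteness) this
    rw [ENNReal.toReal_add (by finiteness) (by finiteness)] at h1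
    have h2 : (μ (Icc (c - δ/2) (c + δ/2))).toReal < ε := by
      rw [← ENNReal.ofReal_toReal (measure_ne_top μ _)] at hδ2
      exact (ENNReal.ofReal_lt_ofReal_iff hε).mp hδ2
    linarith
  rw [Real.dist_eq] at hs
  have hcmem : c ∈ Icc (c - δ/2) (c + δ/2) := by constructor <;> linarith
  have hsmem : s ∈ Icc (c - δ/2) (c + δ/2) := by
    constructor <;> [linarith [abs_lt.mp hs]; linarith [abs_lt.mp hs]]
  rw [Real.dist_eq, abs_lt]
  rcases le_total s c with h | h
  · constructor
    · linarith [key s c h hcmem hsmem]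
    · linarith [hmono h, hε]
  · constructor
    · linarith [hmono h, hε]
    · linarith [key c s h hsmem hcmem]

private lemma stmt6_map (μ : Measure ℝ) [IsFiniteMeasure μ] [NullSingletonClass μ]
    (g : ℝ → ℝ) (hg : ∀ x : ℝ, g x = (μ (Set.Icc 0 x)).toReal)
    (hmono : Monotone g) (hcont : Continuous g)
    (hg0 : ∀ s, 0 ≤ g s) (hgz : g 0 = 0)
    (x : ℝ) (hx0 : 0 ≤ x) :
    Measure.map g (μ.restrict (Set.Icc 0 x)) = volume.restrict (Set.Icc 0 (g x)) := by
  open Set Topology in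
  have hgm : Measurable g := hmono.measurable
  have hofReal : ∀ s, μ (Icc 0 s) = ENNReal.ofReal (g s) := fun s => by
    rw [hg, ENNReal.ofReal_toReal (measure_ne_top μ _)]
  haveI : IsFiniteMeasure (Measure.map g (μ.restrict (Icc 0 x))) :=
    Measure.isFiniteMeasure_map _ _
  refine Measure.ext_of_Iic _ _ (fun a => ?_)
  rw [Measure.map_apply hgm measurableSet_Iic,
    Measure.restrict_apply (hgm measurableSet_Iic),
    Measure.restrict_apply measurableSet_Iic]
  have hvol : Iic a ∩ Icc 0 (g x) = Icc 0 (min a (g x)) := by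
    ext u
    simp only [mem_inter_iff, mem_Iic, mem_Icc, le_min_iff]
    tauto
  rw [hvol, Real.volume_Icc]
  rcases lt_or_ge a 0 with ha | ha
  · have : g ⁻¹' Iic a ∩ Icc 0 x = ∅ := by
      ext u
      simp only [mem_inter_iff, mem_preimage, mem_Iic, mem_Icc, mem_empty_iff_false,
        iff_false]
      rintro ⟨h1, _⟩
      exact absurd (lt_of_le_of_lt h1 ha) (not_lt.mpr (hg0 u))
    rw [this, measure_empty]
    have : min a (g x) - 0 ≤ 0 := by
      simp only [sub_zero]
      exact le_trans (min_le_left _ _) ha.le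
    rw [ENNReal.ofReal_eq_zero.mpr this]
  · set S := g ⁻¹' Iic a ∩ Icc 0 x with hS
    have hSclosed : IsClosed S := (isClosed_Iic.preimage hcont).inter isClosed_Icc
    have hSne : S.Nonempty := ⟨0, by simp [hS, hgz, ha, hx0]⟩
    have hSbdd : BddAbove S := ⟨x, fun u hu => hu.2.2⟩
    set c := sSup S with hc
    have hcmem : c ∈ S := hSclosed.csSup_mem hSne hSbdd
    have hceq : S = Icc 0 c := by
      apply Subset.antisymm
      · exact fun u hu => ⟨hu.2.1, le_csSup hSbdd hu⟩
      · rintro u ⟨hu0, huc⟩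
        exact ⟨le_trans (hmono huc) hcmem.1, hu0, le_trans huc hcmem.2.2⟩
    have hgc : g c = min a (g x) := by
      have h1 : g c ≤ a := hcmem.1
      have h2 : g c ≤ g x := hmono hcmem.2.2
      rcases eq_or_lt_of_le (le_min h1 h2) with h | h
      · exact h.symm ▸ rfl
      · exfalso
        have hclx : c < x := by
          rcases eq_or_lt_of_le hcmem.2.2 with h' | h'
          · exact absurd (lt_min_iff.mp h).2 (by rw [h'] ; exact lt_irrefl _)
          · exact h'
        have hgca : g c < a := (lt_min_iff.mp h).1
        have : ∀ᶠ u in 𝓝 c, g u < a :=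
          (hcont.continuousAt (x := c)).eventually_lt_const hgca
        obtain ⟨η, hη, hball⟩ := Metric.eventually_nhds_iff.mp this
        set u := min (c + η/2) x with hu
        have hcu : c < u := lt_min_iff.mpr ⟨by linarith, hclx⟩
        have huS : u ∈ S := by
          refine ⟨le_of_lt (hball ?_), le_trans hcmem.2.1 hcu.le, min_le_right _ _⟩
          rw [Real.dist_eq, abs_lt]
          constructor
          · have : c - η < c := by linarith
            linarith [lt_of_lt_of_le this hcu.le]
          · have : u ≤ c + η/2 := min_le_left _ _
            linarith
        exact absurd (le_csSup hSbdd huS) (not_le.mpr hcu)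
    rw [hceq, hofReal, hgc, sub_zero]

/-- For a finite non-atomic Borel measure `μ` on `[0,1]` with cumulative distribution
`g(x) = μ([0,x])` and `l ≠ 0`, the function `f(x) = exp(i l g(x))` satisfies
`f(x) − f(0) = i l ∫_{[0,x]} f dμ`; equivalently
`∫_{[0,x]} exp(i l g) dμ = (exp(i l g(x)) − 1)/(i l)`.  Thus `exp(i l g(·))` is an
eigenfunction of `∇_μ` with eigenvalue `i l`. -/
theorem stmt6 (μ : Measure ℝ) [IsFiniteMeasure μ] [NullSingletonClass μ]
    (hsupp : μ (Set.Icc (0:ℝ) 1)ᶜ = 0)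
    (g : ℝ → ℝ) (hg : ∀ x : ℝ, g x = (μ (Set.Icc 0 x)).toReal)
    (l : ℝ) (hl : l ≠ 0) (f : ℝ → ℂ)
    (hf : ∀ x : ℝ, f x = Complex.exp (Complex.I * l * g x)) :
    ∀ x ∈ Set.Icc (0:ℝ) 1,
      f x - f 0 = Complex.I * l * ∫ s in Set.Icc 0 x, f s ∂μ ∧
      (∫ s in Set.Icc 0 x, Complex.exp (Complex.I * l * g s) ∂μ) =
        (Complex.exp (Complex.I * l * g x) - 1) / (Complex.I * l) := by
  have hmono : Monotone g := fun a b hab => by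
    rw [hg, hg]
    exact ENNReal.toReal_mono (measure_ne_top μ _)
      (measure_mono (Set.Icc_subset_Icc le_rfl hab))
  have hcont : Continuous g := stmt6_cont μ g hg
  have hg0 : ∀ s, 0 ≤ g s := fun s => by rw [hg]; exact ENNReal.toReal_nonneg
  have hgz : g 0 = 0 := by
    rw [hg, Set.Icc_self, measure_singleton]; simp
  have hgm : Measurable g := hmono.measurable
  have hil : Complex.I * (l : ℂ) ≠ 0 :=
    mul_ne_zero Complex.I_ne_zero (by exact_mod_cast hl)
  intro x hx
  have hkey : (∫ s in Set.Icc 0 x, Complex.exp (Complex.I * l * g s) ∂μ) =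
      (Complex.exp (Complex.I * l * g x) - 1) / (Complex.I * l) := by
    have hmap := stmt6_map μ g hg hmono hcont hg0 hgz x hx.1
    have hint : (∫ s in Set.Icc 0 x, Complex.exp (Complex.I * l * g s) ∂μ) =
        ∫ t, Complex.exp (Complex.I * l * t) ∂(Measure.map g (μ.restrict (Set.Icc 0 x))) := by
      rw [integral_map hgm.aemeasurable]
      exact (Continuous.aestronglyMeasurable (by continuity))
    rw [hint, hmap]
    have h1 : ∫ t, Complex.exp (Complex.I * l * t) ∂(volume.restrict (Set.Icc 0 (g x))) =
        ∫ t in (0:ℝ)..(g x), Complex.exp (Complex.I * l * t) := by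
      rw [intervalIntegral.integral_of_le (hg0 x),
        integral_Icc_eq_integral_Ioc (μ := volume) (f := fun t : ℝ => Complex.exp (Complex.I * l * t))]
    rw [h1]
    have h2 : ∀ t : ℝ, Complex.I * l * t = (Complex.I * l) * t := fun t => rfl
    calc ∫ t in (0:ℝ)..(g x), Complex.exp (Complex.I * l * t)
        = (Complex.exp ((Complex.I * l) * g x) - Complex.exp ((Complex.I * l) * 0)) /
            (Complex.I * l) := integral_exp_mul_complex hil
      _ = (Complex.exp (Complex.I * l * g x) - 1) / (Complex.I * l) := by
          rw [mul_zero, Complex.exp_zero]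
  refine ⟨?_, hkey⟩
  have hfint : (∫ s in Set.Icc 0 x, f s ∂μ) =
      ∫ s in Set.Icc 0 x, Complex.exp (Complex.I * l * g s) ∂μ :=
    integral_congr_ae (Filter.Eventually.of_forall fun s => hf s)
  rw [hfint, hkey, hf x, hf 0, hgz]
  push_cast
  rw [mul_zero, Complex.exp_zero, mul_div_cancel₀ _ hil]
end

section
/- Let μ be a non-atomic Borel measure on J = [0,1] with 0 < μ(J) < ∞, let g(x) = μ([0,x]), and fix θ ∈ ℝ. For each n ∈ ℤ set λ_n = (θ + 2nπ)/μ(J) and φ_n(x) = μ(J)^{-1/2} exp(i λ_n g(x)). Then the family (φ_n)_{n ∈ ℤ} is an orthonormal basis of the complex Hilbert space L²(μ): the φ_n are orthonormal in L²(μ), and the closure of their linear span is all of L²(μ). -/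
set_option linter.unusedSectionVars false

open MeasureTheory Complex Set

namespace Stmt7Proof

variable {μ : Measure ℝ} [IsFiniteMeasure μ] [NullSingletonClass μ] {g : ℝ → ℝ}

lemma gmono (hg : ∀ x : ℝ, g x = (μ (Set.Icc 0 x)).toReal) : Monotone g := by
  intro x y hxy
  rw [hg, hg]
  exact ENNReal.toReal_mono (measure_ne_top _ _) (measure_mono (Icc_subset_Icc le_rfl hxy))

lemma gnonneg (hg : ∀ x : ℝ, g x = (μ (Set.Icc 0 x)).toReal) (x : ℝ) : 0 ≤ g x := by
  rw [hg]; exact ENNReal.toReal_nonneg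

lemma gzero (hg : ∀ x : ℝ, g x = (μ (Set.Icc 0 x)).toReal) {x : ℝ} (hx : x ≤ 0) : g x = 0 := by
  rw [hg]
  rcases lt_or_eq_of_le hx with h | h
  · rw [Set.Icc_eq_empty (by linarith)]; simp
  · subst h; rw [Set.Icc_self, measure_singleton]; simp

lemma hIic0 (hsupp : μ (Set.Icc (0:ℝ) 1)ᶜ = 0) : μ (Iic 0) = 0 := by
  have h1 : μ (Iio 0) = 0 :=
    measure_mono_null (fun x hx => by simp only [mem_compl_iff, mem_Icc, not_and_or, not_le]
                                      exact Or.inl (by exact hx)) hsupp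
  have h2 : Iic (0:ℝ) = Iio 0 ∪ {0} := by ext x; simp [le_iff_lt_or_eq]
  rw [h2]
  exact measure_union_null h1 (measure_singleton 0)

lemma gle (hsupp : μ (Set.Icc (0:ℝ) 1)ᶜ = 0)
    (hg : ∀ x : ℝ, g x = (μ (Set.Icc 0 x)).toReal) (x : ℝ) :
    g x ≤ (μ (Set.Icc (0:ℝ) 1)).toReal := by
  rw [hg]
  refine ENNReal.toReal_mono (measure_ne_top _ _) ?_
  calc μ (Set.Icc 0 x) ≤ μ Set.univ := measure_mono (subset_univ _)
    _ = μ (Set.Icc (0:ℝ) 1) := by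
        rw [← measure_add_measure_compl (measurableSet_Icc (a := (0:ℝ)) (b := 1)), hsupp, add_zero]

lemma measure_Ioc_eq_zero_of_g_eq
    (hg : ∀ x : ℝ, g x = (μ (Set.Icc 0 x)).toReal)
    {a b : ℝ} (ha : 0 ≤ a) (hab : a ≤ b) (h : g a = g b) : μ (Ioc a b) = 0 := by
  have hdiff : Ioc a b = Icc 0 b \ Icc 0 a := by
    ext x
    simp only [mem_Ioc, mem_diff, mem_Icc, not_and, not_le]
    constructor
    · rintro ⟨h1, h2⟩; exact ⟨⟨by linarith, h2⟩, fun _ => h1⟩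
    · rintro ⟨⟨h1, h2⟩, h3⟩; exact ⟨h3 h1, h2⟩
  have hmeq : μ (Set.Icc 0 a) = μ (Set.Icc 0 b) := by
    rw [hg, hg] at h
    exact (ENNReal.toReal_eq_toReal_iff' (measure_ne_top _ _) (measure_ne_top _ _)).mp h
  rw [hdiff, measure_diff (Icc_subset_Icc le_rfl hab) measurableSet_Icc.nullMeasurableSet
    (measure_ne_top _ _), ← hmeq, tsub_self]

lemma gconst_null (hsupp : μ (Set.Icc (0:ℝ) 1)ᶜ = 0)
    (hg : ∀ x : ℝ, g x = (μ (Set.Icc 0 x)).toReal) :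
    μ {x | ∃ y, y < x ∧ g y = g x} = 0 := by
  have hmono := gmono hg
  have hsub : {x | ∃ y, y < x ∧ g y = g x} ⊆ ⋃ q : ℚ, {x | (q:ℝ) < x ∧ g (q:ℝ) = g x} := by
    rintro x ⟨y, hyx, hgy⟩
    obtain ⟨q, hq1, hq2⟩ := exists_rat_btwn hyx
    exact mem_iUnion.2 ⟨q, hq2, le_antisymm (hmono hq2.le) (by rw [← hgy]; exact hmono hq1.le)⟩
  refine measure_mono_null hsub (measure_iUnion_null fun q => ?_)
  set D := {x | (q:ℝ) < x ∧ g (q:ℝ) = g x} with hD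
  have hcover : D ⊆ (⋃ (r : ℚ) (_ : (r:ℝ) ∈ D), Ioc (q:ℝ) (r:ℝ)) ∪ {x | x ∈ D ∧ ∀ z ∈ D, z ≤ x} := by
    intro x hx
    by_cases hmax : ∀ z ∈ D, z ≤ x
    · exact Or.inr ⟨hx, hmax⟩
    · push_neg at hmax
      obtain ⟨z, hz, hxz⟩ := hmax
      obtain ⟨r, hr1, hr2⟩ := exists_rat_btwn hxz
      have hgr : g (q:ℝ) = g (r:ℝ) :=
        le_antisymm (hx.2 ▸ hmono hr1.le) (hz.2 ▸ hmono hr2.le)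
      exact Or.inl (mem_iUnion.2 ⟨r, mem_iUnion.2 ⟨⟨hx.1.trans hr1, hgr⟩, ⟨hx.1, hr1.le⟩⟩⟩)
  have hmaxnull : μ {x | x ∈ D ∧ ∀ z ∈ D, z ≤ x} = 0 := by
    refine Set.Subsingleton.measure_zero (fun a ha b hb => ?_) μ
    exact le_antisymm (hb.2 a ha.1) (ha.2 b hb.1)
  refine measure_mono_null hcover
    (measure_union_null (measure_iUnion_null fun r => measure_iUnion_null fun hr => ?_) hmaxnull)
  by_cases hq0 : 0 ≤ (q:ℝ)
  · exact measure_Ioc_eq_zero_of_g_eq hg hq0 hr.1.le hr.2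
  · push_neg at hq0
    have hgq : g (q:ℝ) = 0 := gzero hg hq0.le
    have hIccr : μ (Set.Icc 0 (r:ℝ)) = 0 := by
      have h1 : (μ (Set.Icc 0 (r:ℝ))).toReal = 0 := by rw [← hg, ← hr.2, hgq]
      rcases (ENNReal.toReal_eq_zero_iff _).mp h1 with h | h
      · exact h
      · exact absurd h (measure_ne_top _ _)
    have : Ioc (q:ℝ) (r:ℝ) ⊆ Iic 0 ∪ Icc 0 (r:ℝ) := by
      intro x hx
      rcases le_or_gt x 0 with h | h
      · exact Or.inl h
      · exact Or.inr ⟨h.le, hx.2⟩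
    exact measure_mono_null this (measure_union_null (hIic0 hsupp) hIccr)

lemma tau_ae (hsupp : μ (Set.Icc (0:ℝ) 1)ᶜ = 0)
    (hg : ∀ x : ℝ, g x = (μ (Set.Icc 0 x)).toReal) :
    ∀ᵐ x ∂μ, sInf (({y | g x ≤ g y} ∪ Ici 1) ∩ Ici 0) = x := by
  have hmono := gmono hg
  have hnull : μ ({x | ∃ y, y < x ∧ g y = g x} ∪ Iic 0) = 0 :=
    measure_union_null (gconst_null hsupp hg) (hIic0 hsupp)
  filter_upwards [measure_eq_zero_iff_ae_notMem.mp hnull] with x hx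
  simp only [mem_union, not_or, mem_setOf_eq, mem_Iic, not_le, not_exists, not_and] at hx
  obtain ⟨hN, hx0⟩ := hx
  have hgpos : 0 < g x := by
    rcases lt_or_eq_of_le (gnonneg hg x) with h | h
    · exact h
    · exfalso
      refine hN (x/2) (by linarith) ?_
      refine le_antisymm (hmono (by linarith : x/2 ≤ x)) (by rw [← h]; exact gnonneg hg _)
  set S := ({y | g x ≤ g y} ∪ Ici 1) ∩ Ici 0 with hS
  have hxS : x ∈ S := ⟨Or.inl (by simp only [mem_setOf_eq]; exact le_rfl), hx0.le⟩
  have hbdd : BddBelow S := ⟨0, fun y hy => hy.2⟩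
  have hle : sInf S ≤ x := csInf_le hbdd hxS
  rcases lt_or_eq_of_le hle with h | h
  · exfalso
    obtain ⟨y, hyS, hyx⟩ := (csInf_lt_iff hbdd ⟨x, hxS⟩).mp h
    have hgyx : g y = g x := by
      rcases hyS.1 with h1 | h1
      · exact le_antisymm (hmono hyx.le) h1
      · -- y ≥ 1, then x > y ≥ 1, g y = g x = g 1
        have h2 : g y ≤ g x := hmono hyx.le
        have h3 : g x ≤ (μ (Set.Icc (0:ℝ) 1)).toReal := gle hsupp hg x
        have h4 : (μ (Set.Icc (0:ℝ) 1)).toReal = g 1 := (hg 1).symm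
        have h5 : g 1 ≤ g y := hmono h1
        linarith
    exact hN y hyx hgyx
  · exact h
lemma map_g (hsupp : μ (Set.Icc (0:ℝ) 1)ᶜ = 0)
    (hg : ∀ x : ℝ, g x = (μ (Set.Icc 0 x)).toReal) :
    Measure.map g μ = volume.restrict (Ioc 0 (μ (Set.Icc (0:ℝ) 1)).toReal) := by
  set M : ℝ := (μ (Set.Icc (0:ℝ) 1)).toReal with hMdef
  have hmono := gmono hg
  have hmeas : Measurable g := hmono.measurable
  have hμuniv : μ Set.univ = μ (Set.Icc (0:ℝ) 1) := by
    rw [← measure_add_measure_compl (measurableSet_Icc (a := (0:ℝ)) (b := 1)), hsupp, add_zero]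
  haveI : IsFiniteMeasure (Measure.map g μ) :=
    ⟨by rw [Measure.map_apply hmeas MeasurableSet.univ]; exact measure_lt_top μ _⟩
  refine Measure.ext_of_Iic _ _ fun t => ?_
  rw [Measure.map_apply hmeas measurableSet_Iic, Measure.restrict_apply measurableSet_Iic]
  rcases lt_or_ge t 0 with ht | ht
  · have h1 : g ⁻¹' Iic t = ∅ := by
      ext x; simp only [mem_preimage, mem_Iic, mem_empty_iff_false, iff_false, not_le]
      exact lt_of_lt_of_le ht (gnonneg hg x)
    have h2 : Iic t ∩ Ioc 0 M = ∅ := by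
      ext x; simp only [mem_inter_iff, mem_Iic, mem_Ioc, mem_empty_iff_false, iff_false]
      rintro ⟨h3, h4, _⟩; linarith
    simp [h1, h2]
  rcases le_or_gt M t with htM | htM
  · have h1 : g ⁻¹' Iic t = Set.univ := by
      ext x; simp only [mem_preimage, mem_Iic, mem_univ, iff_true]
      exact (gle hsupp hg x).trans htM
    have h2 : Iic t ∩ Ioc 0 M = Ioc 0 M := by
      refine inter_eq_right.mpr fun x hx => ?_
      exact le_trans hx.2 htM
    rw [h1, h2, hμuniv, Real.volume_Ioc, sub_zero]
    exact (ENNReal.ofReal_toReal (measure_ne_top _ _)).symm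
  -- main case 0 ≤ t < M
  · have h2 : Iic t ∩ Ioc 0 M = Ioc 0 t := by
      ext x
      simp only [mem_inter_iff, mem_Iic, mem_Ioc]
      constructor
      · rintro ⟨h3, h4, h5⟩; exact ⟨h4, h3⟩
      · rintro ⟨h3, h4⟩; exact ⟨h4, h3, by linarith⟩
    rw [h2, Real.volume_Ioc]
    set S := g ⁻¹' Iic t with hSdef
    have hg1 : g 1 = M := hg 1
    have hSsub : S ⊆ Iio 1 := by
      intro x hx
      rw [mem_Iio]
      by_contra hx1
      push_neg at hx1
      have : M ≤ g x := hg1 ▸ hmono hx1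
      have : g x ≤ t := hx
      linarith
    have hbdd : BddAbove S := ⟨1, fun x hx => (hSsub hx).le⟩
    have h0S : (0:ℝ) ∈ S := by
      simp only [hSdef, mem_preimage, mem_Iic]
      rw [gzero hg le_rfl]; exact ht
    set s := sSup S with hsdef
    have hs0 : 0 ≤ s := le_csSup hbdd h0S
    have hIioS : Iio s ⊆ S := by
      intro y hy
      obtain ⟨z, hzS, hyz⟩ := exists_lt_of_lt_csSup ⟨0, h0S⟩ hy
      exact le_trans (hmono hyz.le) hzS
    have hSIic : S ⊆ Iic s := fun y hy => le_csSup hbdd hy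
    -- μ S = μ (Icc 0 s)
    have hμS : μ S = μ (Set.Icc 0 s) := by
      have hup : μ S ≤ μ (Set.Icc 0 s) := by
        calc μ S ≤ μ (Iic s) := measure_mono hSIic
          _ ≤ μ (Iic 0 ∪ Icc 0 s) := measure_mono (by
              intro x hx
              rcases le_or_gt x 0 with h | h
              · exact Or.inl h
              · exact Or.inr ⟨h.le, hx⟩)
          _ ≤ μ (Iic 0) + μ (Icc 0 s) := measure_union_le _ _
          _ = μ (Icc 0 s) := by rw [hIic0 hsupp, zero_add]
      have hdown : μ (Set.Icc 0 s) ≤ μ S := by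
        calc μ (Set.Icc 0 s) = μ (Set.Ico 0 s) := (measure_congr (Ico_ae_eq_Icc)).symm
          _ ≤ μ S := measure_mono (fun x hx => hIioS hx.2)
      exact le_antisymm hup hdown
    -- g s = t via sandwich
    have hupper : μ (Set.Icc 0 s) ≤ ENNReal.ofReal t := by
      have hIco : μ (Set.Icc 0 s) = μ (Set.Ico 0 s) := (measure_congr Ico_ae_eq_Icc).symm
      rw [hIco]
      have hmonoseq : Monotone (fun n : ℕ => Set.Icc (0:ℝ) (s - 1/(n+1))) := by
        intro n m hnm
        refine Icc_subset_Icc le_rfl (by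
          have h1 : (1:ℝ)/(m+1) ≤ 1/(n+1) := by
            apply div_le_div_of_nonneg_left (by norm_num) (by positivity) (by exact_mod_cast by omega)
          linarith)
      have hunion : (⋃ n : ℕ, Set.Icc (0:ℝ) (s - 1/(n+1))) = Set.Ico 0 s := by
        ext x
        simp only [mem_iUnion, mem_Icc, mem_Ico]
        constructor
        · rintro ⟨n, h1, h2⟩
          have h5 : (0:ℝ) < 1/((n:ℝ)+1) := by positivity
          exact ⟨h1, lt_of_le_of_lt h2 (by linarith)⟩
        · rintro ⟨h1, h2⟩
          obtain ⟨n, hn⟩ := exists_nat_gt (1/(s - x))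
          refine ⟨n, h1, ?_⟩
          have hsx : 0 < s - x := by linarith
          have hn0 : 0 < (n:ℝ) + 1 := by positivity
          have h6 : 1/(s-x) < (n:ℝ) + 1 := by linarith
          have h7 : 1 < (s - x) * ((n:ℝ)+1) := by
            have := (div_lt_iff₀ hsx).mp h6
            nlinarith
          have h4 : 1/((n:ℝ)+1) < s - x := by
            rw [div_lt_iff₀ hn0]
            nlinarith
          linarith
      have htend := tendsto_measure_iUnion_atTop (μ := μ) hmonoseq
      rw [hunion] at htend
      refine le_of_tendsto htend (Filter.Eventually.of_forall fun n => ?_)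
      show μ (Set.Icc (0:ℝ) (s - 1/(n+1))) ≤ ENNReal.ofReal t
      rcases lt_or_ge (s - 1/(n+1)) 0 with hc | hc
      · rw [Set.Icc_eq_empty (by linarith)]; simp
      · have hcS : (s - 1/(n+1)) ∈ S := hIioS (by
          simp only [mem_Iio]
          have : (0:ℝ) < 1/(n+1) := by positivity
          linarith)
        have : g (s - 1/(n+1)) ≤ t := hcS
        rw [hg] at this
        calc μ (Set.Icc (0:ℝ) (s - 1/(n+1)))
            = ENNReal.ofReal ((μ (Set.Icc (0:ℝ) (s - 1/(n+1)))).toReal) :=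
              (ENNReal.ofReal_toReal (measure_ne_top _ _)).symm
          _ ≤ ENNReal.ofReal t := ENNReal.ofReal_le_ofReal this
    have hlower : ENNReal.ofReal t ≤ μ (Set.Icc 0 s) := by
      have hanti : Antitone (fun n : ℕ => Set.Icc (0:ℝ) (s + 1/(n+1))) := by
        intro n m hnm
        refine Icc_subset_Icc le_rfl (by
          have h1 : (1:ℝ)/(m+1) ≤ 1/(n+1) := by
            apply div_le_div_of_nonneg_left (by norm_num) (by positivity) (by exact_mod_cast by omega)
          linarith)
      have hinter : (⋂ n : ℕ, Set.Icc (0:ℝ) (s + 1/(n+1))) = Set.Icc 0 s := by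
        ext x
        simp only [mem_iInter, mem_Icc]
        constructor
        · intro h
          refine ⟨(h 0).1, ?_⟩
          by_contra hxs
          push_neg at hxs
          obtain ⟨n, hn⟩ := exists_nat_gt (1/(x - s))
          have hsx : 0 < x - s := by linarith
          have hn0 : 0 < (n:ℝ) + 1 := by positivity
          have h3 : 1/(x-s) < n + 1 := by linarith
          have h7 : 1 < (x - s) * ((n:ℝ)+1) := by
            have := (div_lt_iff₀ hsx).mp h3
            nlinarith
          have h4 : 1/((n:ℝ)+1) < x - s := by
            rw [div_lt_iff₀ hn0]
            nlinarith
          have := (h n).2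
          linarith
        · rintro ⟨h1, h2⟩ 
          intro n
          have : (0:ℝ) < 1/(n+1) := by positivity
          exact ⟨h1, by linarith⟩
      have htend := tendsto_measure_iInter_atTop (μ := μ)
        (fun n => measurableSet_Icc.nullMeasurableSet) hanti ⟨0, measure_ne_top _ _⟩
      rw [hinter] at htend
      refine ge_of_tendsto htend (Filter.Eventually.of_forall fun n => ?_)
      show ENNReal.ofReal t ≤ μ (Set.Icc (0:ℝ) (s + 1/(n+1)))
      have hnotS : (s + 1/(n+1)) ∉ S := by
        intro hmem
        have : s + 1/(n+1) ≤ s := le_csSup hbdd hmem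
        have : (0:ℝ) < 1/(n+1) := by positivity
        linarith
      have hgt : t < g (s + 1/(n+1)) := by
        by_contra hcon
        push_neg at hcon
        exact hnotS hcon
      rw [hg] at hgt
      calc ENNReal.ofReal t ≤ ENNReal.ofReal ((μ (Set.Icc (0:ℝ) (s + 1/(n+1)))).toReal) :=
            ENNReal.ofReal_le_ofReal hgt.le
        _ = μ (Set.Icc (0:ℝ) (s + 1/(n+1))) := ENNReal.ofReal_toReal (measure_ne_top _ _)
    rw [hμS, sub_zero]
    exact le_antisymm hupper hlower
end Stmt7Proof

/-- Let `μ` be a non-atomic Borel measure on `J = [0,1]` with `0 < μ(J) < ∞`, let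
`g(x) = μ([0,x])`, and fix `θ ∈ ℝ`.  With `λ_n = (θ + 2nπ)/μ(J)` and
`φ_n(x) = μ(J)^{-1/2} exp(i λ_n g(x))`, the family `(φ_n)_{n ∈ ℤ}` is an orthonormal
basis of the complex Hilbert space `L²(μ)`: the `φ_n` are orthonormal and the closure
of their linear span is all of `L²(μ)`. -/
theorem stmt7 (μ : Measure ℝ) [IsFiniteMeasure μ] [NullSingletonClass μ]
    (hsupp : μ (Set.Icc (0:ℝ) 1)ᶜ = 0) (hpos : μ (Set.Icc (0:ℝ) 1) ≠ 0)
    (g : ℝ → ℝ) (hg : ∀ x : ℝ, g x = (μ (Set.Icc 0 x)).toReal)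
    (θ : ℝ) (lam : ℤ → ℝ)
    (hlam : ∀ n : ℤ, lam n = (θ + 2 * (n : ℝ) * Real.pi) / (μ (Set.Icc (0:ℝ) 1)).toReal)
    (φ : ℤ → ℝ → ℂ)
    (hφ : ∀ (n : ℤ) (x : ℝ),
      φ n x = (1 / Real.sqrt ((μ (Set.Icc (0:ℝ) 1)).toReal)) *
        Complex.exp (Complex.I * (lam n) * (g x))) :
    ∃ Φ : ℤ → Lp ℂ 2 μ,
      (∀ n : ℤ, (Φ n : ℝ → ℂ) =ᵐ[μ] φ n) ∧
      Orthonormal ℂ Φ ∧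
      (Submodule.span ℂ (Set.range Φ)).topologicalClosure = ⊤ := by
  classical
  set M : ℝ := (μ (Set.Icc (0:ℝ) 1)).toReal with hMdef
  have hMpos : 0 < M := ENNReal.toReal_pos hpos (measure_ne_top _ _)
  have hMne : (M:ℂ) ≠ 0 := by exact_mod_cast hMpos.ne'
  haveI : Fact (0 < M) := ⟨hMpos⟩
  have hmono := Stmt7Proof.gmono hg
  have hmeas : Measurable g := hmono.measurable
  have hμuniv : μ Set.univ = μ (Set.Icc (0:ℝ) 1) := by
    rw [← measure_add_measure_compl (measurableSet_Icc (a := (0:ℝ)) (b := 1)), hsupp, add_zero]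
  -- membership in L²
  have hφmeas : ∀ n : ℤ, AEStronglyMeasurable (φ n) μ := by
    intro n
    have : φ n = fun x => (1 / (Real.sqrt M : ℂ)) * Complex.exp (I * (lam n) * (g x)) :=
      funext fun x => hφ n x
    rw [this]
    exact (((Complex.measurable_ofReal.comp hmeas).const_mul
      (I * (lam n))).cexp.const_mul _).aestronglyMeasurable
  have hφnorm : ∀ n x, ‖φ n x‖ = 1 / Real.sqrt M := by
    intro n x
    rw [hφ n x, norm_mul]
    have h1 : (I * (lam n : ℂ) * (g x : ℂ)) = ((lam n * g x : ℝ) : ℂ) * I := by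
      push_cast; ring
    rw [h1, Complex.norm_exp_ofReal_mul_I, mul_one]
    simp [norm_div, Real.norm_eq_abs, _root_.abs_of_nonneg (Real.sqrt_nonneg M)]
  have hφmem : ∀ n : ℤ, MemLp (φ n) 2 μ := fun n =>
    MemLp.of_bound (hφmeas n) (1 / Real.sqrt M)
      (Filter.Eventually.of_forall fun x => (hφnorm n x).le)
  have hconj : ∀ (n : ℤ) (x : ℝ), (starRingEnd ℂ) (φ n x) =
      (1 / (Real.sqrt M : ℂ)) * Complex.exp (-(I * (lam n) * (g x))) := by
    intro n x
    rw [hφ n x, map_mul, ← Complex.exp_conj]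
    congr 1
    · simp
    · simp only [map_mul, Complex.conj_I, Complex.conj_ofReal]
      ring
  refine ⟨fun n => (hφmem n).toLp (φ n), fun n => MemLp.coeFn_toLp (hφmem n), ?_, ?_⟩
  -- shared facts
  · -- orthonormality
    have hsq : (1 / (Real.sqrt M : ℂ)) * (1 / (Real.sqrt M : ℂ)) = 1 / (M:ℂ) := by
      rw [div_mul_div_comm, one_mul, ← Complex.ofReal_mul, Real.mul_self_sqrt hMpos.le]
    have hlamM : ∀ n : ℤ, lam n * M = θ + 2 * (n:ℝ) * Real.pi := by
      intro n
      rw [hlam n]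
      field_simp
    have hint : ∀ c : ℝ, (∫ x, Complex.exp (I * c * (g x)) ∂μ)
        = ∫ t in Set.Ioc (0:ℝ) M, Complex.exp (I * c * (t:ℂ)) := by
      intro c
      have h1 := MeasureTheory.integral_map (φ := g) (μ := μ) hmeas.aemeasurable
        (f := fun t : ℝ => Complex.exp (I * c * (t:ℂ)))
        (((continuous_const.mul Complex.continuous_ofReal).cexp).aestronglyMeasurable
          (f := fun t : ℝ => Complex.exp (I * c * (t:ℂ))))
      rw [Stmt7Proof.map_g hsupp hg] at h1
      exact h1.symm
    rw [orthonormal_iff_ite]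
    intro n m
    have hinner : (inner ℂ ((hφmem n).toLp (φ n)) ((hφmem m).toLp (φ m)) : ℂ)
        = ∫ x, (starRingEnd ℂ) (φ n x) * φ m x ∂μ := by
      rw [MeasureTheory.L2.inner_def]
      refine integral_congr_ae ?_
      filter_upwards [MemLp.coeFn_toLp (hφmem n), MemLp.coeFn_toLp (hφmem m)] with x h1 h2
      rw [h1, h2, RCLike.inner_apply]; ring
    rw [hinner]
    have hpoint : ∀ x, (starRingEnd ℂ) (φ n x) * φ m x
        = (1 / (M:ℂ)) * Complex.exp (I * ((lam m - lam n : ℝ) : ℂ) * (g x)) := by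
      intro x
      rw [hconj n x, hφ m x]
      rw [mul_mul_mul_comm, hsq, ← Complex.exp_add]
      congr 1
      push_cast
      ring
    simp only [hpoint]
    rw [integral_const_mul]
    by_cases hnm : n = m
    · subst hnm
      simp only [sub_self, Complex.ofReal_zero, mul_zero, zero_mul, Complex.exp_zero]
      rw [if_pos trivial, integral_const, measureReal_def, hμuniv]
      rw [Complex.real_smul, mul_one, ← hMdef]
      rw [one_div, inv_mul_cancel₀ hMne]
    · rw [if_neg hnm]
      set c : ℝ := lam m - lam n with hc
      have hcM : c * M = 2 * ((m:ℝ) - n) * Real.pi := by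
        rw [hc, sub_mul, hlamM m, hlamM n]
        ring
      have hmn : ((m:ℝ) - n) ≠ 0 := by
        intro hcon
        apply hnm
        have : (m:ℝ) = n := by linarith
        exact_mod_cast this.symm
      have hc0 : c ≠ 0 := by
        intro hcon
        rw [hcon, zero_mul] at hcM
        have := Real.pi_ne_zero
        exact (mul_ne_zero (mul_ne_zero two_ne_zero hmn) this) hcM.symm
      have hIc : I * (c:ℂ) ≠ 0 := by
        simp [Complex.I_ne_zero, Complex.ofReal_eq_zero, hc0]
      have hexp1 : Complex.exp (I * (c:ℂ) * (M:ℂ)) = 1 := by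
        have he : I * (c:ℂ) * (M:ℂ) = ((m - n : ℤ) : ℂ) * (2 * (Real.pi:ℂ) * I) := by
          rw [mul_assoc, ← Complex.ofReal_mul, hcM]
          push_cast
          ring
        rw [he]
        exact Complex.exp_int_mul_two_pi_mul_I (m - n)
      rw [hint c, ← intervalIntegral.integral_of_le hMpos.le]
      have : (∫ t in (0:ℝ)..M, Complex.exp (I * (c:ℂ) * (t:ℂ)))
          = (Complex.exp (I * (c:ℂ) * (M:ℂ)) - Complex.exp (I * (c:ℂ) * ((0:ℝ):ℂ))) / (I * c) :=
        integral_exp_mul_complex hIc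
      rw [this, hexp1]
      norm_num
  · -- density
    rw [Submodule.topologicalClosure_eq_top_iff, Submodule.eq_bot_iff]
    intro f hf
    have hfn : ∀ n : ℤ, (inner ℂ ((hφmem n).toLp (φ n)) f : ℂ) = 0 := fun n =>
      (Submodule.mem_orthogonal _ f).mp hf _ (Submodule.subset_span ⟨n, rfl⟩)
    obtain ⟨f₀, hf₀sm, hf₀ae⟩ : ∃ f₀ : ℝ → ℂ, StronglyMeasurable f₀ ∧ ⇑f =ᵐ[μ] f₀ :=
      ⟨(Lp.aestronglyMeasurable f).mk _, (Lp.aestronglyMeasurable f).stronglyMeasurable_mk,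
        (Lp.aestronglyMeasurable f).ae_eq_mk⟩
    set τ : ℝ → ℝ := fun t => sInf (({y | t ≤ g y} ∪ Set.Ici 1) ∩ Set.Ici 0) with hτdef
    have hτmono : Monotone τ := by
      intro t t' htt
      refine csInf_le_csInf ⟨0, fun y hy => hy.2⟩
        ⟨1, Or.inr (Set.mem_Ici.mpr le_rfl), Set.mem_Ici.mpr zero_le_one⟩ fun y hy => ?_
      exact ⟨hy.1.imp (fun h2 => htt.trans h2) id, hy.2⟩
    have hτmeas : Measurable τ := hτmono.measurable
    have hid : ∀ᵐ x ∂μ, τ (g x) = x := Stmt7Proof.tau_ae hsupp hg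
    set h : ℝ → ℂ := f₀ ∘ τ with hhdef
    have hhsm : StronglyMeasurable h := hf₀sm.comp_measurable hτmeas
    have hcomp : (fun x => h (g x)) =ᵐ[μ] f₀ := by
      filter_upwards [hid] with x h1
      show f₀ (τ (g x)) = f₀ x
      rw [h1]
    have hcompf : (fun x => h (g x)) =ᵐ[μ] ⇑f := hcomp.trans hf₀ae.symm
    have hmp : MeasurePreserving g μ (volume.restrict (Set.Ioc 0 M)) :=
      ⟨hmeas, Stmt7Proof.map_g hsupp hg⟩
    have hhL2 : MemLp h 2 (volume.restrict (Set.Ioc 0 M)) := by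
      refine ⟨hhsm.aestronglyMeasurable, ?_⟩
      have h2 : eLpNorm (h ∘ g) 2 μ = eLpNorm (⇑f) 2 μ := eLpNorm_congr_ae hcompf
      rw [← eLpNorm_comp_measurePreserving hhsm.aestronglyMeasurable hmp, h2]
      exact Lp.eLpNorm_lt_top f
    have hInt0 : ∀ n : ℤ,
        ∫ x, Complex.exp (-(I * (lam n) * (g x))) * f₀ x ∂μ = 0 := by
      intro n
      have h0 := hfn n
      rw [MeasureTheory.L2.inner_def] at h0
      have h1 : (∫ x, (inner ℂ ((((hφmem n).toLp (φ n)) : ℝ → ℂ) x) ((f : ℝ → ℂ) x) : ℂ) ∂μ)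
          = ∫ x, (1 / (Real.sqrt M : ℂ)) *
              (Complex.exp (-(I * (lam n) * (g x))) * f₀ x) ∂μ := by
        refine integral_congr_ae ?_
        filter_upwards [MemLp.coeFn_toLp (hφmem n), hf₀ae] with x h2 h3
        rw [RCLike.inner_apply, h2, h3, hconj n x, mul_assoc]; ring
      rw [h1, integral_const_mul] at h0
      rcases mul_eq_zero.mp h0 with h4 | h4
      · exfalso
        rw [div_eq_zero_iff] at h4
        rcases h4 with h5 | h5
        · exact one_ne_zero h5
        · rw [Complex.ofReal_eq_zero] at h5
          exact (Real.sqrt_pos.mpr hMpos).ne' h5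
      · exact h4
    have hIntν : ∀ n : ℤ,
        (∫ t in Set.Ioc (0:ℝ) M, Complex.exp (-(I * (lam n) * (t:ℂ))) * h t) = 0 := by
      intro n
      have haesm : AEStronglyMeasurable
          (fun t : ℝ => Complex.exp (-(I * (lam n) * (t:ℂ))) * h t) (Measure.map g μ) := by
        rw [hmp.map_eq]
        exact ((((continuous_const.mul Complex.continuous_ofReal).neg).cexp).aestronglyMeasurable).mul
          hhsm.aestronglyMeasurable
      have h1 := MeasureTheory.integral_map (φ := g) hmeas.aemeasurable haesm
      rw [hmp.map_eq] at h1
      rw [h1]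
      calc (∫ x, Complex.exp (-(I * (lam n) * ((g x):ℂ))) * h (g x) ∂μ)
          = ∫ x, Complex.exp (-(I * (lam n) * (g x))) * f₀ x ∂μ := by
            refine integral_congr_ae ?_
            filter_upwards [hcomp] with x h2
            rw [h2]
        _ = 0 := hInt0 n
    set k : ℝ → ℂ := fun t => Complex.exp (-(I * (θ:ℂ) * (t:ℂ) / (M:ℂ))) * h t with hkdef
    have hksm : StronglyMeasurable k :=
      (((((continuous_const.mul Complex.continuous_ofReal).div_const
        _).neg).cexp).stronglyMeasurable).mul hhsm
    set K : AddCircle M → ℂ := AddCircle.liftIoc M 0 k with hKdef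
    have hKeq : ∀ t ∈ Set.Ioc (0:ℝ) M, K (t : AddCircle M) = k t := by
      intro t ht
      refine AddCircle.liftIoc_coe_apply ?_
      rwa [zero_add]
    have hKsm : StronglyMeasurable K := by
      have hrestr : StronglyMeasurable ((Set.Ioc (0:ℝ) (0 + M)).restrict k) :=
        hksm.comp_measurable measurable_subtype_coe
      have hKe : K = ((Set.Ioc (0:ℝ) (0 + M)).restrict k) ∘ (AddCircle.measurableEquivIoc M 0) :=
        rfl
      rw [hKe]
      exact hrestr.comp_measurable (AddCircle.measurableEquivIoc M 0).measurable
    have hmkmp : MeasurePreserving (((↑) : ℝ → AddCircle M))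
        (volume.restrict (Set.Ioc 0 M)) volume := by
      have h1 := AddCircle.measurePreserving_mk M 0
      rwa [zero_add] at h1
    have hKcomp : (fun t : ℝ => K (t : AddCircle M))
        =ᵐ[volume.restrict (Set.Ioc (0:ℝ) M)] k := by
      filter_upwards [ae_restrict_mem measurableSet_Ioc] with t ht using hKeq t ht
    have hknorm : ∀ t : ℝ, ‖k t‖ = ‖h t‖ := by
      intro t
      show ‖Complex.exp _ * h t‖ = _
      rw [norm_mul]
      have h1 : -(I * (θ:ℂ) * (t:ℂ) / (M:ℂ)) = ((-(θ * t / M) : ℝ) : ℂ) * I := by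
        push_cast; ring
      rw [h1, Complex.norm_exp_ofReal_mul_I, one_mul]
    have hKL2vol : MemLp K 2 (volume : Measure (AddCircle M)) := by
      refine ⟨hKsm.aestronglyMeasurable, ?_⟩
      have h1 : eLpNorm (K ∘ ((↑) : ℝ → AddCircle M)) 2 (volume.restrict (Set.Ioc (0:ℝ) M))
          = eLpNorm K 2 (volume : Measure (AddCircle M)) :=
        eLpNorm_comp_measurePreserving hKsm.aestronglyMeasurable hmkmp
      have h2 : eLpNorm (K ∘ ((↑) : ℝ → AddCircle M)) 2 (volume.restrict (Set.Ioc (0:ℝ) M))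
          = eLpNorm k 2 (volume.restrict (Set.Ioc (0:ℝ) M)) := eLpNorm_congr_ae hKcomp
      rw [← h1, h2, eLpNorm_congr_norm_ae (Filter.Eventually.of_forall hknorm)]
      exact hhL2.2
    have hhaar : (AddCircle.haarAddCircle : Measure (AddCircle M))
        = (ENNReal.ofReal M)⁻¹ • (volume : Measure (AddCircle M)) := by
      rw [AddCircle.volume_eq_smul_haarAddCircle, smul_smul,
        ENNReal.inv_mul_cancel (ENNReal.ofReal_pos.mpr hMpos).ne' ENNReal.ofReal_ne_top, one_smul]
    have hKL2 : MemLp K 2 (AddCircle.haarAddCircle (T := M)) := by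
      rw [hhaar]
      exact hKL2vol.smul_measure (ENNReal.inv_ne_top.mpr (ENNReal.ofReal_pos.mpr hMpos).ne')
    have hcoeff0 : ∀ n : ℤ, fourierCoeff K n = 0 := by
      intro n
      rw [fourierCoeff_eq_intervalIntegral K n 0, zero_add,
        intervalIntegral.integral_of_le hMpos.le]
      have hpt : ∀ t ∈ Set.Ioc (0:ℝ) M, (fourier (-n) (t : AddCircle M)) • K (t : AddCircle M)
          = Complex.exp (-(I * (lam n) * (t:ℂ))) * h t := by
        intro t ht
        rw [hKeq t ht, smul_eq_mul, fourier_coe_apply]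
        show _ * (Complex.exp _ * h t) = _
        rw [← mul_assoc, ← Complex.exp_add]
        congr 2
        rw [hlam n]
        push_cast
        field_simp
        ring
      rw [setIntegral_congr_fun measurableSet_Ioc hpt, hIntν n, smul_zero]
    have hK0 : MemLp.toLp K hKL2 = 0 := by
      rw [← LinearIsometryEquiv.map_eq_zero_iff (fourierBasis (T := M)).repr]
      refine lp.ext (funext fun n => ?_)
      rw [fourierBasis_repr]
      have h1 : fourierCoeff (⇑(MemLp.toLp K hKL2)) n = fourierCoeff K n := by
        refine integral_congr_ae ?_
        filter_upwards [MemLp.coeFn_toLp hKL2] with z hz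
        rw [hz]
      rw [h1, hcoeff0 n]
      rfl
    have hKae : K =ᵐ[(volume : Measure (AddCircle M))] (0 : AddCircle M → ℂ) := by
      have h2 := MemLp.coeFn_toLp hKL2
      rw [hK0] at h2
      have h3 : K =ᵐ[AddCircle.haarAddCircle (T := M)] (0 : AddCircle M → ℂ) :=
        h2.symm.trans (Lp.coeFn_zero ℂ 2 _)
      rw [AddCircle.volume_eq_smul_haarAddCircle]
      exact Measure.ae_smul_measure h3 _
    have hk0 : k =ᵐ[volume.restrict (Set.Ioc (0:ℝ) M)] 0 := by
      have h3 : (K ∘ ((↑) : ℝ → AddCircle M)) =ᵐ[volume.restrict (Set.Ioc (0:ℝ) M)]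
          ((0 : AddCircle M → ℂ) ∘ ((↑) : ℝ → AddCircle M)) :=
        ae_eq_comp hmkmp.measurable.aemeasurable (by rw [hmkmp.map_eq]; exact hKae)
      exact hKcomp.symm.trans h3
    have hh0 : h =ᵐ[volume.restrict (Set.Ioc (0:ℝ) M)] 0 := by
      filter_upwards [hk0] with t ht
      have h4 : Complex.exp (-(I * (θ:ℂ) * (t:ℂ) / (M:ℂ))) * h t = 0 := ht
      rcases mul_eq_zero.mp h4 with h5 | h5
      · exact absurd h5 (Complex.exp_ne_zero _)
      · exact h5
    have hg0 : (fun x => h (g x)) =ᵐ[μ] 0 := by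
      have h6 : (h ∘ g) =ᵐ[μ] ((0 : ℝ → ℂ) ∘ g) :=
        ae_eq_comp hmeas.aemeasurable (by rw [hmp.map_eq]; exact hh0)
      exact h6
    exact Lp.eq_zero_iff_ae_eq_zero.mpr (hcompf.symm.trans hg0)
end

section
/- Let μ be a finite non-atomic Borel measure on ℝ with total mass m = μ(ℝ), and let g : ℝ → ℝ be its cumulative distribution function g(x) = μ((−∞, x]). Then the pushforward of μ under g equals Lebesgue measure restricted to the interval [0, m]; that is, for every Borel set B ⊆ ℝ, μ(g⁻¹(B)) = λ(B ∩ [0, m]), where λ denotes Lebesgue measure. -/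
open MeasureTheory

open Set Filter Topology in
private lemma key_s8 (μ : Measure ℝ) [IsFiniteMeasure μ] [NullSingletonClass μ]
    (g : ℝ → ℝ) (hg : ∀ x : ℝ, g x = (μ (Set.Iic x)).toReal) (t : ℝ) :
    μ (g ⁻¹' Set.Iic t) = volume (Set.Iic t ∩ Set.Icc 0 (μ Set.univ).toReal) := by
  set m := (μ Set.univ).toReal with hm
  have hfin : ∀ s : Set ℝ, μ s ≠ ⊤ := fun s => (measure_lt_top μ s).ne
  have hofg : ∀ x, μ (Set.Iic x) = ENNReal.ofReal (g x) := fun x => by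
    rw [hg, ENNReal.ofReal_toReal (hfin _)]
  have hmono : Monotone g := fun a b hab => by
    rw [hg, hg]
    exact ENNReal.toReal_mono (hfin _) (measure_mono (Set.Iic_subset_Iic.2 hab))
  have hg0 : ∀ x, 0 ≤ g x := fun x => by rw [hg]; exact ENNReal.toReal_nonneg
  have hgm : ∀ x, g x ≤ m := fun x => by
    rw [hg, hm]
    exact ENNReal.toReal_mono (hfin _) (measure_mono (Set.subset_univ _))
  have hm0 : 0 ≤ m := ENNReal.toReal_nonneg
  have huniv : μ Set.univ = ENNReal.ofReal m := (ENNReal.ofReal_toReal (hfin _)).symm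
  rcases lt_or_ge t 0 with ht | ht
  · have h1 : Set.Iic t ∩ Set.Icc 0 m = ∅ := by
      ext x; simp only [Set.mem_inter_iff, Set.mem_Iic, Set.mem_Icc, Set.mem_empty_iff_false,
        iff_false]
      rintro ⟨h1, h2, _⟩; linarith
    have h2 : g ⁻¹' Set.Iic t = ∅ := by
      ext x; simp only [Set.mem_preimage, Set.mem_Iic, Set.mem_empty_iff_false, iff_false]
      intro h; linarith [hg0 x]
    rw [h1, h2]; simp
  · -- t ≥ 0
    have hdiv : ∀ a b : ℕ, a ≤ b → (1:ℝ) / (b + 1) ≤ 1 / (a + 1) := by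
      intro a b hab
      have hcast : (a:ℝ) ≤ b := Nat.cast_le.2 hab
      exact one_div_le_one_div_of_le (by positivity) (by linarith)
    have hRHS : volume (Set.Iic t ∩ Set.Icc 0 m) = ENNReal.ofReal (min m t) := by
      have : Set.Iic t ∩ Set.Icc 0 m = Set.Icc 0 (min m t) := by
        ext y
        simp only [Set.mem_inter_iff, Set.mem_Iic, Set.mem_Icc, le_min_iff, min_le_iff]
        constructor
        · rintro ⟨h1, h2, h3⟩; exact ⟨h2, h3, h1⟩
        · rintro ⟨h1, h2, h3⟩
          exact ⟨h3, h1, h2⟩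
      rw [this, Real.volume_Icc, sub_zero]
    rw [hRHS]
    rcases le_or_gt m t with hmt | htm
    · have h2 : g ⁻¹' Set.Iic t = Set.univ := by
        ext x; simp only [Set.mem_preimage, Set.mem_Iic, Set.mem_univ, iff_true]
        exact le_trans (hgm x) hmt
      rw [h2, huniv, min_eq_left hmt]
    · -- t < m
      rw [min_eq_right htm.le]
      set S := g ⁻¹' Set.Iic t with hS
      by_cases hne : S.Nonempty
      · -- bounded above
        have hlt : ENNReal.ofReal t < μ Set.univ := by
          rw [huniv]; exact (ENNReal.ofReal_lt_ofReal_iff_of_nonneg ht).2 htm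
        obtain ⟨x, hx⟩ : ∃ x : ℝ, ENNReal.ofReal t < μ (Set.Iic x) :=
          ((tendsto_measure_Iic_atTop μ).eventually (eventually_gt_nhds hlt)).exists
        have hxgt : t < g x := by
          rw [hofg] at hx
          exact (ENNReal.ofReal_lt_ofReal_iff_of_nonneg ht).1 hx
        have hbdd : BddAbove S := by
          refine ⟨x, fun z hz => ?_⟩
          by_contra hzx
          push_neg at hzx
          exact absurd (le_trans (hmono hzx.le) hz) (not_le.2 hxgt)
        set s := sSup S with hs
        -- g s ≤ t
        have hgsle : g s ≤ t := by
          have hIio : μ (Set.Iio s) = μ (Set.Iic s) := measure_congr Iio_ae_eq_Iic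
          have hU : (⋃ n : ℕ, Set.Iic (s - 1 / (n + 1))) = Set.Iio s := by
            ext y
            simp only [Set.mem_iUnion, Set.mem_Iic, Set.mem_Iio]
            constructor
            · rintro ⟨n, hn⟩
              have : (0:ℝ) < 1 / (n + 1) := by positivity
              linarith
            · intro hy
              obtain ⟨n, hn⟩ := exists_nat_one_div_lt (sub_pos.2 hy)
              exact ⟨n, by linarith⟩
          have htend : Tendsto (μ ∘ fun n : ℕ => Set.Iic (s - 1 / (n + 1))) atTop
              (𝓝 (μ (Set.Iio s))) := by
            rw [← hU]
            exact tendsto_measure_iUnion_atTop (fun a b hab => Set.Iic_subset_Iic.2 (by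
              have := hdiv a b hab
              linarith))
          have hbound : ∀ n : ℕ, (μ ∘ fun n : ℕ => Set.Iic (s - 1 / (n + 1))) n ≤
              ENNReal.ofReal t := by
            intro n
            have hlt : s - 1 / (n + 1) < s := by
              have : (0:ℝ) < 1 / (n + 1) := by positivity
              linarith
            obtain ⟨z, hzS, hzgt⟩ := exists_lt_of_lt_csSup hne hlt
            calc (μ ∘ fun n : ℕ => Set.Iic (s - 1 / (n + 1))) n
                ≤ μ (Set.Iic z) := measure_mono (Set.Iic_subset_Iic.2 hzgt.le)
              _ = ENNReal.ofReal (g z) := hofg z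
              _ ≤ ENNReal.ofReal t := ENNReal.ofReal_le_ofReal hzS
          have h1 : μ (Set.Iio s) ≤ ENNReal.ofReal t := le_of_tendsto htend
            (Filter.Eventually.of_forall hbound)
          rw [hIio, hofg] at h1
          calc g s = (ENNReal.ofReal (g s)).toReal := by
                rw [ENNReal.toReal_ofReal (hg0 s)]
            _ ≤ (ENNReal.ofReal t).toReal := ENNReal.toReal_mono ENNReal.ofReal_ne_top h1
            _ = t := ENNReal.toReal_ofReal ht
        -- g s ≥ t
        have hgsge : t ≤ g s := by
          by_contra hlt'
          push_neg at hlt'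
          have ht0 : 0 < t := lt_of_le_of_lt (hg0 s) hlt'
          have hI : (⋂ n : ℕ, Set.Iic (s + 1 / (n + 1))) = Set.Iic s := by
            ext y
            simp only [Set.mem_iInter, Set.mem_Iic]
            constructor
            · intro hy
              by_contra hys
              push_neg at hys
              obtain ⟨n, hn⟩ := exists_nat_one_div_lt (sub_pos.2 hys)
              have := hy n
              linarith
            · intro hy n
              have : (0:ℝ) < 1 / (n + 1) := by positivity
              linarith
          have htend : Tendsto (μ ∘ fun n : ℕ => Set.Iic (s + 1 / (n + 1))) atTop
              (𝓝 (μ (Set.Iic s))) := by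
            rw [← hI]
            refine tendsto_measure_iInter_atTop
              (fun n => measurableSet_Iic.nullMeasurableSet)
              (fun a b hab => Set.Iic_subset_Iic.2 (by
                have := hdiv a b hab
                linarith)) ⟨0, hfin _⟩
          have hlt2 : μ (Set.Iic s) < ENNReal.ofReal t := by
            rw [hofg]
            exact (ENNReal.ofReal_lt_ofReal_iff ht0).2 hlt'
          obtain ⟨n, hn⟩ := (htend.eventually (eventually_lt_nhds hlt2)).exists
          have hmem : s + 1 / (n + 1) ∈ S := by
            simp only [hS, Set.mem_preimage, Set.mem_Iic]
            have : g (s + 1 / (n + 1)) = (μ (Set.Iic (s + 1 / (n + 1)))).toReal := hg _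
            rw [this]
            calc (μ (Set.Iic (s + 1 / (n + 1)))).toReal
                ≤ (ENNReal.ofReal t).toReal := ENNReal.toReal_mono ENNReal.ofReal_ne_top hn.le
              _ = t := ENNReal.toReal_ofReal ht
          have := le_csSup hbdd hmem
          have hpos : (0:ℝ) < 1 / (n + 1) := by positivity
          linarith
        have hgst : g s = t := le_antisymm hgsle hgsge
        have hSeq : S = Set.Iic s := by
          ext y
          simp only [hS, Set.mem_preimage, Set.mem_Iic]
          constructor
          · intro hy; exact le_csSup hbdd hy
          · intro hy
            calc g y ≤ g s := hmono hy
              _ = t := hgst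
        rw [hSeq, hofg, hgst]
      · -- S empty
        rw [Set.not_nonempty_iff_eq_empty] at hne
        rw [hne, measure_empty]
        rcases eq_or_lt_of_le ht with ht0 | ht0
        · rw [← ht0]; simp
        · exfalso
          have hI : (⋂ n : ℕ, Set.Iic (-(n:ℝ))) = ∅ := by
            ext y
            simp only [Set.mem_iInter, Set.mem_Iic, Set.mem_empty_iff_false, iff_false]
            push_neg
            obtain ⟨n, hn⟩ := exists_nat_gt (-y)
            exact ⟨n, by linarith⟩
          have htend : Tendsto (μ ∘ fun n : ℕ => Set.Iic (-(n:ℝ))) atTop (𝓝 0) := by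
            have := tendsto_measure_iInter_atTop (μ := μ)
              (s := fun n : ℕ => Set.Iic (-(n:ℝ)))
              (fun n => measurableSet_Iic.nullMeasurableSet)
              (fun a b hab => Set.Iic_subset_Iic.2 (by
                have hcast : (a:ℝ) ≤ b := Nat.cast_le.2 hab
                linarith)) ⟨0, hfin _⟩
            rwa [hI, measure_empty] at this
          have hpos : (0:ENNReal) < ENNReal.ofReal t := by
            simp [ENNReal.ofReal_pos, ht0]
          obtain ⟨n, hn⟩ := (htend.eventually (eventually_lt_nhds hpos)).exists
          have hmem : (-(n:ℝ)) ∈ S := by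
            simp only [hS, Set.mem_preimage, Set.mem_Iic]
            rw [hg]
            calc (μ (Set.Iic (-(n:ℝ)))).toReal
                ≤ (ENNReal.ofReal t).toReal := ENNReal.toReal_mono ENNReal.ofReal_ne_top hn.le
              _ = t := ENNReal.toReal_ofReal ht
          rw [hne] at hmem
          exact hmem

/-- The pushforward of a finite non-atomic Borel measure `μ` on `ℝ` under its cumulative
distribution function `g(x) = μ((−∞,x])` is Lebesgue measure restricted to `[0, μ(ℝ)]`:
for every Borel set `B`, `μ(g⁻¹(B)) = λ(B ∩ [0, μ(ℝ)])`. -/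
theorem stmt8 (μ : Measure ℝ) [IsFiniteMeasure μ] [NullSingletonClass μ]
    (g : ℝ → ℝ) (hg : ∀ x : ℝ, g x = (μ (Set.Iic x)).toReal) :
    ∀ B : Set ℝ, MeasurableSet B →
      μ (g ⁻¹' B) = volume (B ∩ Set.Icc 0 (μ Set.univ).toReal) := by
  intro B hB
  set m := (μ Set.univ).toReal with hm
  have hfin : ∀ s : Set ℝ, μ s ≠ ⊤ := fun s => (measure_lt_top μ s).ne
  have hmono : Monotone g := fun a b hab => by
    rw [hg, hg]
    exact ENNReal.toReal_mono (hfin _) (measure_mono (Set.Iic_subset_Iic.2 hab))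
  have hgmeas : Measurable g := hmono.measurable
  haveI hfm : IsFiniteMeasure (μ.map g) :=
    ⟨by rw [Measure.map_apply hgmeas MeasurableSet.univ]; exact measure_lt_top μ _⟩
  have hkey : μ.map g = volume.restrict (Set.Icc 0 m) := by
    refine Measure.ext_of_Iic _ _ fun t => ?_
    rw [Measure.map_apply hgmeas measurableSet_Iic,
      Measure.restrict_apply measurableSet_Iic]
    exact key_s8 μ g hg t
  calc μ (g ⁻¹' B) = (μ.map g) B := (Measure.map_apply hgmeas hB).symm
    _ = (volume.restrict (Set.Icc 0 m)) B := by rw [hkey]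
    _ = volume (B ∩ Set.Icc 0 m) := Measure.restrict_apply hB
end

section
/- Let μ be a non-atomic Borel probability measure on [0,1], let g(x) = μ([0,x]), and let c ∈ ℝ. Define H : [0,1] × [0,1] → ℝ by H(x,t) = (g(x) − 1) g(t) if t ≤ x and H(x,t) = (g(t) − 1) g(x) if t ≥ x. Suppose f : [0,1] → ℝ is continuous, f(x) = f(0) + ∫_0^x f'(s) ds where f' : [0,1] → ℝ is continuous, and suppose f'(x) = c ∫_{[0,x]} f dμ for all x ∈ [0,1] together with the Neumann boundary condition f'(1) = 0. Then f'(x) = c ∫_0^1 H(x,t) f'(t) dt (Lebesgue integral) for all x ∈ [0,1]. -/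
open MeasureTheory
open scoped Topology
section stmt13aux
open Set

lemma measIccdiff (μ : Measure ℝ) [IsProbabilityMeasure μ] [NullSingletonClass μ] {t x : ℝ} (ht : 0 < t) (htx : t ≤ x) :
    (μ (Icc t x)).toReal = (μ (Icc 0 x)).toReal - (μ (Icc 0 t)).toReal := by
  have h1 : μ (Ico 0 t) = μ (Icc 0 t) := measure_congr (Ico_ae_eq_Icc)
  have h2 : Ico 0 t ∪ Icc t x = Icc 0 x := Ico_union_Icc_eq_Icc ht.le htx
  have hd : Disjoint (Ico 0 t) (Icc t x) := by
    rw [Set.disjoint_left]; rintro a ⟨_, ha⟩ ⟨ha', _⟩; exact absurd ha' (not_le.mpr ha)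
  have h3 : μ (Ico 0 t ∪ Icc t x) = μ (Ico 0 t) + μ (Icc t x) := measure_union hd measurableSet_Icc
  rw [h2, h1] at h3
  rw [h3, ENNReal.toReal_add (measure_ne_top μ _) (measure_ne_top μ _)]
  ring

lemma fubini_aux (μ : Measure ℝ) [IsProbabilityMeasure μ] [NullSingletonClass μ] {x : ℝ} (hx : 0 ≤ x)
    (F : ℝ → ℝ) (hF : Continuous F) (g : ℝ → ℝ)
    (hg : ∀ t : ℝ, g t = (μ (Set.Icc 0 t)).toReal) :
    ∫ s in Set.Icc 0 x, (∫ t in (0:ℝ)..s, F t) ∂μ = ∫ t in (0:ℝ)..x, (g x - g t) * F t := by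
  set K : ℝ × ℝ → ℝ := fun p => if p.2 ≤ p.1 ∧ 0 < p.2 ∧ p.2 ≤ x then F p.2 else 0 with hK
  have hS : MeasurableSet {p : ℝ × ℝ | p.2 ≤ p.1 ∧ 0 < p.2 ∧ p.2 ≤ x} := by
    apply (measurableSet_le measurable_snd measurable_fst).inter
    exact ((measurableSet_lt measurable_const measurable_snd).inter
      (measurableSet_le measurable_snd measurable_const))
  have hKsm : StronglyMeasurable K := by
    have : K = Set.indicator {p : ℝ × ℝ | p.2 ≤ p.1 ∧ 0 < p.2 ∧ p.2 ≤ x} (fun p => F p.2) := by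
      funext p; simp [hK, Set.indicator_apply]
    rw [this]
    exact ((hF.comp continuous_snd).stronglyMeasurable).indicator hS
  obtain ⟨C, hC⟩ := (isCompact_Icc (a := (0:ℝ)) (b := x)).exists_bound_of_continuousOn hF.continuousOn
  have hCnn : 0 ≤ C := le_trans (norm_nonneg _) (hC 0 (by simp [hx]))
  have hKint : Integrable K ((μ.restrict (Set.Icc 0 x)).prod (volume.restrict (Set.Ioc 0 x))) := by
    apply Integrable.mono' (integrable_const C) hKsm.aestronglyMeasurable
    filter_upwards with p
    by_cases h : p.2 ≤ p.1 ∧ 0 < p.2 ∧ p.2 ≤ x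
    · rw [hK]; simp only [if_pos h]; exact hC p.2 ⟨h.2.1.le, h.2.2⟩
    · rw [hK]; simp only [if_neg h]; simpa using hCnn
  have step1 : ∫ s in Set.Icc 0 x, (∫ t in (0:ℝ)..s, F t) ∂μ
      = ∫ s in Set.Icc 0 x, (∫ t in Set.Ioc 0 x, K (s, t)) ∂μ := by
    apply setIntegral_congr_fun measurableSet_Icc
    intro s hs
    dsimp only
    have h1 : ∫ t in (0:ℝ)..s, F t = ∫ t in Set.Ioc 0 s, F t :=
      intervalIntegral.integral_of_le hs.1
    have h2 : ∫ t in Set.Ioc 0 x, K (s, t) = ∫ t in Set.Ioc 0 x, (Set.Iic s).indicator F t := by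
      apply setIntegral_congr_fun measurableSet_Ioc
      intro t ht
      dsimp only
      simp [hK, Set.indicator_apply, Set.mem_Iic, ht.1, ht.2]
    rw [h1, h2, setIntegral_indicator measurableSet_Iic, Set.Ioc_inter_Iic, min_eq_right hs.2]
  have step2 : ∫ s in Set.Icc 0 x, (∫ t in Set.Ioc 0 x, K (s, t)) ∂μ
      = ∫ t in Set.Ioc 0 x, (∫ s in Set.Icc 0 x, K (s, t) ∂μ) := by
    exact integral_integral_swap hKint
  have step3 : ∫ t in Set.Ioc 0 x, (∫ s in Set.Icc 0 x, K (s, t) ∂μ)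
      = ∫ t in Set.Ioc 0 x, (g x - g t) * F t := by
    apply setIntegral_congr_fun measurableSet_Ioc
    intro t ht
    dsimp only
    have h2 : ∫ s in Set.Icc 0 x, K (s, t) ∂μ
        = ∫ s in Set.Icc 0 x, (Set.Ici t).indicator (fun _ => F t) s ∂μ := by
      apply setIntegral_congr_fun measurableSet_Icc
      intro s _
      dsimp only
      by_cases h : t ≤ s <;> simp [hK, Set.indicator_apply, h, ht.1, ht.2]
    have h3 : Icc 0 x ∩ Ici t = Icc t x := by
      ext a
      simp only [Set.mem_inter_iff, Set.mem_Icc, Set.mem_Ici]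
      constructor
      · rintro ⟨⟨_, h2⟩, h3⟩; exact ⟨h3, h2⟩
      · rintro ⟨h1, h2⟩; exact ⟨⟨ht.1.le.trans h1, h2⟩, h1⟩
    rw [h2, setIntegral_indicator measurableSet_Ici, setIntegral_const, measureReal_def, h3, smul_eq_mul,
      measIccdiff μ ht.1 ht.2, hg, hg]
  rw [step1, step2, step3, intervalIntegral.integral_of_le hx]

end stmt13aux
open Set

/-- Eigenfunctions of the Neumann Krein–Feller operator satisfy the integral equation
with the kernel `H`: if `μ` is a non-atomic Borel probability measure on `[0,1]`,
`g(x) = μ([0,x])`, `f` has continuous derivative `f'` with `f(x) = f(0) + ∫_0^x f'`,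
`f'(x) = c ∫_{[0,x]} f dμ` for all `x ∈ [0,1]`, and `f'(1) = 0`, then
`f'(x) = c ∫_0^1 H(x,t) f'(t) dt` where `H(x,t) = (g(x)−1)g(t)` for `t ≤ x` and
`H(x,t) = (g(t)−1)g(x)` for `t ≥ x`. -/
theorem stmt13 (μ : Measure ℝ) [IsProbabilityMeasure μ] [NullSingletonClass μ]
    (hsupp : μ (Set.Icc (0:ℝ) 1)ᶜ = 0)
    (g : ℝ → ℝ) (hg : ∀ x : ℝ, g x = (μ (Set.Icc 0 x)).toReal)
    (c : ℝ) (H : ℝ → ℝ → ℝ)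
    (hH₁ : ∀ x t : ℝ, t ≤ x → H x t = (g x - 1) * g t)
    (hH₂ : ∀ x t : ℝ, x ≤ t → H x t = (g t - 1) * g x)
    (f f' : ℝ → ℝ) (hfc : ContinuousOn f (Set.Icc (0:ℝ) 1))
    (hf'c : ContinuousOn f' (Set.Icc (0:ℝ) 1))
    (hf : ∀ x ∈ Set.Icc (0:ℝ) 1, f x = f 0 + ∫ s in (0:ℝ)..x, f' s)
    (heig : ∀ x ∈ Set.Icc (0:ℝ) 1, f' x = c * ∫ s in Set.Icc 0 x, f s ∂μ)
    (hbc : f' 1 = 0) :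
    ∀ x ∈ Set.Icc (0:ℝ) 1, f' x = c * ∫ t in (0:ℝ)..1, H x t * f' t := by
  -- continuous extension of f'
  set F : ℝ → ℝ := fun t => f' (max 0 (min 1 t)) with hFdef
  have hclamp : Continuous fun t : ℝ => max 0 (min 1 t) :=
    continuous_const.max (continuous_const.min continuous_id)
  have hmem : ∀ t : ℝ, max 0 (min 1 t) ∈ Icc (0:ℝ) 1 := by
    intro t
    constructor
    · exact le_max_left _ _
    · exact max_le zero_le_one (min_le_left _ _)
  have hFcont : Continuous F := hf'c.comp_continuous hclamp hmem
  have hFeq : ∀ t ∈ Icc (0:ℝ) 1, F t = f' t := by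
    intro t ht
    have : max 0 (min 1 t) = t := by
      rw [min_eq_right ht.2, max_eq_right ht.1]
    simp [hFdef, this]
  -- basic facts about g
  have hg1 : g 1 = 1 := by
    have h := measure_add_measure_compl (μ := μ) (measurableSet_Icc (a := (0:ℝ)) (b := 1))
    rw [hsupp, add_zero, measure_univ] at h
    rw [hg, h, ENNReal.toReal_one]
  have hgmeas : Measurable g := by
    have hmono : Monotone g := by
      intro a b hab
      rw [hg, hg]
      exact ENNReal.toReal_mono (measure_ne_top μ _) (measure_mono (Icc_subset_Icc le_rfl hab))
    exact hmono.measurable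
  have hgbd : ∀ t : ℝ, ‖g t‖ ≤ 1 := by
    intro t
    rw [hg, Real.norm_eq_abs, abs_of_nonneg ENNReal.toReal_nonneg]
    exact ENNReal.toReal_le_of_le_ofReal zero_le_one (by simpa using prob_le_one)
  -- integrability
  have hFii : ∀ a b : ℝ, IntervalIntegrable F volume a b := fun a b => hFcont.intervalIntegrable a b
  have hgF : ∀ a b : ℝ, IntervalIntegrable (fun t => g t * F t) volume a b := by
    intro a b
    constructor
    · exact Integrable.bdd_mul (hFii a b).1 hgmeas.aestronglyMeasurable (ae_of_all _ hgbd)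
    · exact Integrable.bdd_mul (hFii a b).2 hgmeas.aestronglyMeasurable (ae_of_all _ hgbd)
  -- key identity
  have key : ∀ x ∈ Icc (0:ℝ) 1,
      f' x = c * (f 0 * g x + ∫ t in (0:ℝ)..x, (g x - g t) * F t) := by
    intro x hx
    rw [heig x hx]
    congr 1
    have hxsub : Icc (0:ℝ) x ⊆ Icc 0 1 := Icc_subset_Icc le_rfl hx.2
    have e1 : ∫ s in Icc 0 x, f s ∂μ = ∫ s in Icc 0 x, (f 0 + ∫ t in (0:ℝ)..s, F t) ∂μ := by
      apply setIntegral_congr_fun measurableSet_Icc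
      intro s hs
      dsimp only
      rw [hf s (hxsub hs)]
      congr 1
      rw [intervalIntegral.integral_of_le hs.1, intervalIntegral.integral_of_le hs.1]
      apply setIntegral_congr_fun measurableSet_Ioc
      intro t ht
      exact (hFeq t ⟨ht.1.le, ht.2.trans (hs.2.trans hx.2)⟩).symm
    have hprim : Integrable (fun s => ∫ t in (0:ℝ)..s, F t) (μ.restrict (Icc 0 x)) :=
      ((intervalIntegral.continuous_primitive hFii 0).continuousOn).integrableOn_Icc
    have e2 : ∫ s in Icc 0 x, (f 0 + ∫ t in (0:ℝ)..s, F t) ∂μ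
        = f 0 * g x + ∫ s in Icc 0 x, (∫ t in (0:ℝ)..s, F t) ∂μ := by
      rw [integral_add (integrable_const _) hprim, setIntegral_const, measureReal_def, smul_eq_mul, hg, mul_comm]
    rw [e1, e2, fubini_aux μ hx.1 F hFcont g hg]
  -- expand the key integral
  have expand : ∀ x : ℝ, 0 ≤ x → ∫ t in (0:ℝ)..x, (g x - g t) * F t
      = g x * (∫ t in (0:ℝ)..x, F t) - ∫ t in (0:ℝ)..x, g t * F t := by
    intro x hx0
    have : ∀ t : ℝ, (g x - g t) * F t = g x * F t - g t * F t := by intro t; ring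
    rw [intervalIntegral.integral_congr (fun t _ => this t),
      intervalIntegral.integral_sub ((hFii 0 x).const_mul (g x)) (hgF 0 x),
      intervalIntegral.integral_const_mul]
  -- boundary condition
  have hb : 0 = c * (f 0 + ((∫ t in (0:ℝ)..1, F t) - ∫ t in (0:ℝ)..1, g t * F t)) := by
    have k1 := key 1 ⟨zero_le_one, le_refl 1⟩
    rw [hbc, expand 1 zero_le_one, hg1] at k1
    linear_combination k1
  -- main conclusion
  intro x hx
  set A := ∫ t in (0:ℝ)..x, g t * F t with hA
  set Cx := ∫ t in (0:ℝ)..x, F t with hCx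
  set B1 := ∫ t in x..1, g t * F t with hB1
  set C1 := ∫ t in x..1, F t with hC1
  have hsplitF : ∫ t in (0:ℝ)..1, F t = Cx + C1 :=
    (intervalIntegral.integral_add_adjacent_intervals (hFii 0 x) (hFii x 1)).symm
  have hsplitgF : ∫ t in (0:ℝ)..1, g t * F t = A + B1 :=
    (intervalIntegral.integral_add_adjacent_intervals (hgF 0 x) (hgF x 1)).symm
  have hkeyx : f' x = c * (f 0 * g x + (g x * Cx - A)) := by
    rw [key x hx, expand x hx.1]
  have hb' : 0 = c * (f 0 + ((Cx + C1) - (A + B1))) := by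
    rw [← hsplitF, ← hsplitgF]; exact hb
  -- compute the target integral
  have htarget : ∫ t in (0:ℝ)..1, H x t * f' t = (g x - 1) * A + g x * (B1 - C1) := by
    have hI1 : IntegrableOn (fun t => H x t * f' t) (Ioc 0 x) volume := by
      apply IntegrableOn.congr_fun ((hgF 0 x).1.const_mul (g x - 1))
      · intro t ht
        dsimp only
        rw [hH₁ x t ht.2, ← hFeq t ⟨ht.1.le, ht.2.trans hx.2⟩]
        ring
      · exact measurableSet_Ioc
    have hI2 : IntegrableOn (fun t => H x t * f' t) (Ioc x 1) volume := by
      apply IntegrableOn.congr_fun (((hgF x 1).1.sub (hFii x 1).1).const_mul (g x))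
      · intro t ht
        dsimp only
        simp only [Pi.sub_apply]
        rw [hH₂ x t ht.1.le, ← hFeq t ⟨hx.1.trans ht.1.le, ht.2⟩]
        ring
      · exact measurableSet_Ioc
    have hu : Ioc (0:ℝ) x ∪ Ioc x 1 = Ioc 0 1 := Ioc_union_Ioc_eq_Ioc hx.1 hx.2
    have hsplit : ∫ t in Ioc (0:ℝ) 1, H x t * f' t
        = (∫ t in Ioc (0:ℝ) x, H x t * f' t) + ∫ t in Ioc x 1, H x t * f' t := by
      rw [← hu]
      exact setIntegral_union (Ioc_disjoint_Ioc_of_le le_rfl) measurableSet_Ioc hI1 hI2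
    have hp1 : ∫ t in Ioc (0:ℝ) x, H x t * f' t = (g x - 1) * A := by
      have : ∫ t in Ioc (0:ℝ) x, H x t * f' t = ∫ t in Ioc (0:ℝ) x, (g x - 1) * (g t * F t) := by
        apply setIntegral_congr_fun measurableSet_Ioc
        intro t ht
        dsimp only
        rw [hH₁ x t ht.2, hFeq t ⟨ht.1.le, ht.2.trans hx.2⟩]
        ring
      rw [this, ← intervalIntegral.integral_of_le hx.1, intervalIntegral.integral_const_mul, ← hA]
    have hp2 : ∫ t in Ioc x 1, H x t * f' t = g x * (B1 - C1) := by
      have : ∫ t in Ioc x 1, H x t * f' t = ∫ t in Ioc x 1, g x * (g t * F t - F t) := by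
        apply setIntegral_congr_fun measurableSet_Ioc
        intro t ht
        dsimp only
        rw [hH₂ x t ht.1.le, hFeq t ⟨hx.1.trans ht.1.le, ht.2⟩]
        ring
      rw [this, ← intervalIntegral.integral_of_le hx.2, intervalIntegral.integral_const_mul,
        intervalIntegral.integral_sub (hgF x 1) (hFii x 1), ← hB1, ← hC1]
    rw [intervalIntegral.integral_of_le (zero_le_one : (0:ℝ) ≤ 1), hsplit, hp1, hp2]
  rw [htarget]
  linear_combination hkeyx - g x * hb'
end

section
/- Let X be a measurable space, N a positive integer, σ_1, …, σ_N : X → X measurable maps, and p_1, …, p_N > 0 with p_1 + ⋯ + p_N = 1. Let ρ be the probability measure on {1, …, N} with ρ({i}) = p_i, let π = ρ^{⊗ℕ} be the infinite product probability measure on Ω = {1,…,N}^ℕ, and let W : Ω → X be a measurable map satisfying W(ω) = σ_{ω(0)}(W(Sω)) for all ω ∈ Ω, where S denotes the one-sided shift (Sω)(n) = ω(n+1). Then the pushforward measure μ = π ∘ W^{-1} satisfies the iterated-function-system identity μ = Σ_{i=1}^N p_i · (μ ∘ σ_i^{-1}), i.e. μ(B) = Σ_i p_i μ(σ_i^{-1}(B))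 for every measurable set B ⊆ X. -/
open MeasureTheory

section Aux

variable {N : ℕ}

/-- measure of a singleton rectangle -/
lemma aux_sing (ρ : Measure (Fin N)) (μ : Measure (ℕ → Fin N))
    (hπ : ∀ (s : Finset ℕ) (B : ℕ → Set (Fin N)),
      μ {ω | ∀ i ∈ s, ω i ∈ B i} = ∏ i ∈ s, ρ (B i))
    (s : Finset ℕ) (f : ∀ n : s, Fin N) :
    μ (s.restrict (π := fun _ => Fin N) ⁻¹' ({f} : Set (∀ n : s, Fin N))) = ∏ n ∈ s.attach, ρ {f n} := by
  classical
  set B : ℕ → Set (Fin N) := fun n => if h : n ∈ s then {f ⟨n, h⟩} else Set.univ with hB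
  have hset : s.restrict (π := fun _ => Fin N) ⁻¹' ({f} : Set (∀ n : s, Fin N))
      = {ω : ℕ → Fin N | ∀ n ∈ s, ω n ∈ B n} := by
    ext ω
    simp only [Set.mem_preimage, Set.mem_singleton_iff, Set.mem_setOf_eq, funext_iff,
      Finset.restrict]
    constructor
    · intro h n hn
      simp [hB, dif_pos hn, h ⟨n, hn⟩]
    · intro h n
      have := h n n.2
      simpa [hB, dif_pos n.2] using this
  rw [hset, hπ]
  rw [← Finset.prod_attach s (fun n => ρ (B n))]
  exact Finset.prod_congr rfl fun n _ => by simp [hB, dif_pos n.2]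

/-- measure of a shifted singleton rectangle intersected with a first-coordinate set -/
lemma aux_sing_shift (ρ : Measure (Fin N)) (μ : Measure (ℕ → Fin N))
    (hπ : ∀ (s : Finset ℕ) (B : ℕ → Set (Fin N)),
      μ {ω | ∀ i ∈ s, ω i ∈ B i} = ∏ i ∈ s, ρ (B i))
    (i : Fin N) (s : Finset ℕ) (f : ∀ n : s, Fin N) :
    μ ({ω : ℕ → Fin N | ω 0 = i}
        ∩ (fun ω n => ω (n + 1)) ⁻¹' (s.restrict (π := fun _ => Fin N) ⁻¹' ({f} : Set (∀ n : s, Fin N))))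
      = ρ {i} * ∏ n ∈ s.attach, ρ {f n} := by
  classical
  set B : ℕ → Set (Fin N) := fun n => if h : n ∈ s then {f ⟨n, h⟩} else Set.univ with hB
  set B' : ℕ → Set (Fin N) := fun m => if m = 0 then {i} else B (m - 1) with hB'
  set s' : Finset ℕ := insert 0 (s.image (· + 1)) with hs'
  have hset : {ω : ℕ → Fin N | ω 0 = i}
        ∩ (fun ω n => ω (n + 1)) ⁻¹' (s.restrict (π := fun _ => Fin N) ⁻¹' ({f} : Set (∀ n : s, Fin N)))
      = {ω : ℕ → Fin N | ∀ m ∈ s', ω m ∈ B' m} := by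
    ext ω
    simp only [Set.mem_inter_iff, Set.mem_preimage, Set.mem_singleton_iff, Set.mem_setOf_eq,
      funext_iff, Finset.restrict, hs', Finset.mem_insert, Finset.mem_image]
    constructor
    · rintro ⟨h0, h1⟩ m hm
      rcases hm with rfl | ⟨n, hn, rfl⟩
      · simpa [hB'] using h0
      · simpa [hB', hB, dif_pos hn] using h1 ⟨n, hn⟩
    · intro h
      constructor
      · simpa [hB'] using h 0 (Or.inl rfl)
      · intro n
        have := h (↑n + 1) (Or.inr ⟨n, n.2, rfl⟩)
        simpa [hB', hB, dif_pos n.2] using this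
  rw [hset, hπ]
  have h0 : (0 : ℕ) ∉ s.image (· + 1) := by simp
  rw [hs', Finset.prod_insert h0]
  have h1 : ρ (B' 0) = ρ {i} := by simp [hB']
  have h2 : ∏ m ∈ s.image (· + 1), ρ (B' m) = ∏ n ∈ s.attach, ρ {f n} := by
    rw [Finset.prod_image (fun a _ b _ h => by omega)]
    rw [← Finset.prod_attach s (fun n => ρ (B' (n + 1)))]
    exact Finset.prod_congr rfl fun n _ => by simp [hB', hB, dif_pos n.2]
  rw [h1, h2]

lemma aux_key (p : Fin N → ℝ)
    (ρ : Measure (Fin N)) (hρ : ∀ i : Fin N, ρ {i} = ENNReal.ofReal (p i))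
    (μ : Measure (ℕ → Fin N)) [IsProbabilityMeasure μ]
    (hπ : ∀ (s : Finset ℕ) (B : ℕ → Set (Fin N)),
      μ {ω | ∀ i ∈ s, ω i ∈ B i} = ∏ i ∈ s, ρ (B i)) (i : Fin N) :
    Measure.map (fun ω n => ω (n + 1)) (μ.restrict {ω : ℕ → Fin N | ω 0 = i})
      = ENNReal.ofReal (p i) • μ := by
  classical
  have hSm : Measurable (fun (ω : ℕ → Fin N) n => ω (n + 1)) :=
    measurable_pi_lambda _ fun n => measurable_pi_apply _
  have hM : MeasurableSet {ω : ℕ → Fin N | ω 0 = i} := by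
    have he : {ω : ℕ → Fin N | ω 0 = i} = (fun ω : ℕ → Fin N => ω 0) ⁻¹' {i} := rfl
    rw [he]; exact measurable_pi_apply 0 (measurableSet_singleton i)
  have hM0 : μ {ω : ℕ → Fin N | ω 0 = i} = ρ {i} := by
    have := hπ {0} (fun _ => {i})
    simpa using this
  have := Measure.isFiniteMeasure_map
    (μ.restrict {ω : ℕ → Fin N | ω 0 = i}) (fun ω n => ω (n + 1))
  refine ext_of_generate_finite (measurableCylinders (fun _ : ℕ => Fin N))
    generateFrom_measurableCylinders.symm isPiSystem_measurableCylinders ?_ ?_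
  · intro t ht
    obtain ⟨s, S, hS, rfl⟩ := (mem_measurableCylinders t).1 ht
    have hfin : S.Finite := S.toFinite
    have hcyl : cylinder s S
        = ⋃ f ∈ hfin.toFinset, s.restrict (π := fun _ => Fin N) ⁻¹' ({f} : Set (∀ n : s, Fin N)) := by
      ext ω
      simp only [mem_cylinder, Set.mem_iUnion, Set.Finite.mem_toFinset, Set.mem_preimage,
        Set.mem_singleton_iff, exists_prop]
      exact ⟨fun h => ⟨s.restrict ω, h, rfl⟩, fun ⟨f, hf, he⟩ => he ▸ hf⟩
    have hmeas_pre : ∀ f : ∀ n : s, Fin N,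
        MeasurableSet (s.restrict (π := fun _ => Fin N) ⁻¹' ({f} : Set (∀ n : s, Fin N)) : Set (ℕ → Fin N)) :=
      fun f => (Finset.measurable_restrict s) (measurableSet_singleton f)
    have hdisj : Set.PairwiseDisjoint (↑hfin.toFinset)
        (fun f : ∀ n : s, Fin N =>
          (s.restrict (π := fun _ => Fin N) ⁻¹' ({f} : Set (∀ n : s, Fin N)) : Set (ℕ → Fin N))) := by
      intro a _ b _ hab
      exact Disjoint.preimage _ (by simpa using hab)
    have hScyl : MeasurableSet (cylinder (α := fun _ : ℕ => Fin N) s S) := MeasurableSet.cylinder (α := fun _ : ℕ => Fin N) s hS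
    rw [Measure.map_apply hSm hScyl, Measure.restrict_apply (hSm hScyl)]
    rw [hcyl, Set.preimage_iUnion₂, Set.iUnion₂_inter]
    calc μ (⋃ f ∈ hfin.toFinset,
            (fun (ω : ℕ → Fin N) n => ω (n + 1)) ⁻¹'
              (s.restrict (π := fun _ => Fin N) ⁻¹' ({f} : Set (∀ n : s, Fin N)))
              ∩ {ω : ℕ → Fin N | ω 0 = i})
        = ∑ f ∈ hfin.toFinset, μ ((fun (ω : ℕ → Fin N) n => ω (n + 1)) ⁻¹'
            (s.restrict (π := fun _ => Fin N) ⁻¹' ({f} : Set (∀ n : s, Fin N))) ∩ {ω : ℕ → Fin N | ω 0 = i}) := by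
          refine measure_biUnion_finset ?_ fun f _ => ((hSm (hmeas_pre f)).inter hM)
          intro a ha b hb hab
          exact Disjoint.mono Set.inter_subset_left Set.inter_subset_left
            (Disjoint.preimage _ (Disjoint.preimage _ (by simpa using hab)))
      _ = ∑ f ∈ hfin.toFinset, ENNReal.ofReal (p i)
            * μ (s.restrict (π := fun _ => Fin N) ⁻¹' ({f} : Set (∀ n : s, Fin N))) := by
          refine Finset.sum_congr rfl fun f _ => ?_
          rw [Set.inter_comm, aux_sing_shift ρ μ hπ i s f, hρ i, aux_sing ρ μ hπ s f]
      _ = ENNReal.ofReal (p i)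
            * μ (⋃ f ∈ hfin.toFinset, s.restrict (π := fun _ => Fin N) ⁻¹' ({f} : Set (∀ n : s, Fin N))) := by
          rw [measure_biUnion_finset hdisj fun f _ => hmeas_pre f, Finset.mul_sum]
      _ = (ENNReal.ofReal (p i) • μ)
            (⋃ f ∈ hfin.toFinset,
              s.restrict (π := fun _ => Fin N) ⁻¹' ({f} : Set (∀ n : s, Fin N))) := by
          rw [Measure.smul_apply, smul_eq_mul]
  · rw [Measure.map_apply hSm MeasurableSet.univ]
    simp [Measure.restrict_apply MeasurableSet.univ, hM0, hρ i]

end Aux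

/-- If `π` is the infinite product of the weight measure `ρ` (`ρ {i} = p i`) on
`Ω = {1,…,N}^ℕ` and the coding map `W : Ω → X` satisfies the shift relation
`W(ω) = σ_{ω 0}(W(Sω))`, then the pushforward `μ = π ∘ W⁻¹` is an IFS measure:
`μ(B) = Σ_i p_i μ(σ_i⁻¹ B)` for every measurable `B`. -/
theorem stmt14 {X : Type*} [MeasurableSpace X] (N : ℕ) (hN : 0 < N)
    (σ : Fin N → X → X) (hσ : ∀ i, Measurable (σ i))
    (p : Fin N → ℝ) (hp : ∀ i, 0 < p i) (hsum : ∑ i, p i = 1)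
    (ρ : Measure (Fin N)) (hρ : ∀ i : Fin N, ρ {i} = ENNReal.ofReal (p i))
    (π : Measure (ℕ → Fin N)) [IsProbabilityMeasure π]
    (hπ : ∀ (s : Finset ℕ) (B : ℕ → Set (Fin N)),
      π {ω | ∀ i ∈ s, ω i ∈ B i} = ∏ i ∈ s, ρ (B i))
    (W : (ℕ → Fin N) → X) (hW : Measurable W)
    (hshift : ∀ ω : ℕ → Fin N, W ω = σ (ω 0) (W fun n => ω (n + 1))) :
    ∀ B : Set X, MeasurableSet B →
      Measure.map W π B =
        ∑ i : Fin N, ENNReal.ofReal (p i) * Measure.map W π (σ i ⁻¹' B) := by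
  intro B hB
  have hSm : Measurable (fun (ω : ℕ → Fin N) n => ω (n + 1)) :=
    measurable_pi_lambda _ fun n => measurable_pi_apply _
  have hMi : ∀ i : Fin N, MeasurableSet {ω : ℕ → Fin N | ω 0 = i} := by
    intro i
    have he : {ω : ℕ → Fin N | ω 0 = i} = (fun ω : ℕ → Fin N => ω 0) ⁻¹' {i} := rfl
    rw [he]; exact measurable_pi_apply 0 (measurableSet_singleton i)
  have hA : ∀ i : Fin N, MeasurableSet (W ⁻¹' (σ i ⁻¹' B)) := fun i => hW ((hσ i) hB)
  have hdec : W ⁻¹' B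
      = ⋃ i : Fin N, {ω : ℕ → Fin N | ω 0 = i}
          ∩ (fun ω n => ω (n + 1)) ⁻¹' (W ⁻¹' (σ i ⁻¹' B)) := by
    ext ω
    simp only [Set.mem_preimage, Set.mem_iUnion, Set.mem_inter_iff, Set.mem_setOf_eq]
    constructor
    · intro h
      exact ⟨ω 0, rfl, by rw [← hshift ω]; exact h⟩
    · rintro ⟨i, rfl, h⟩
      rw [hshift ω]; exact h
  rw [Measure.map_apply hW hB, hdec, measure_iUnion ?_ (fun i => (hMi i).inter (hSm (hA i)))]
  · rw [tsum_fintype]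
    refine Finset.sum_congr rfl fun i _ => ?_
    have hkey := aux_key p ρ hρ π hπ i
    have : π ({ω : ℕ → Fin N | ω 0 = i}
        ∩ (fun ω n => ω (n + 1)) ⁻¹' (W ⁻¹' (σ i ⁻¹' B)))
        = (Measure.map (fun ω n => ω (n + 1)) (π.restrict {ω : ℕ → Fin N | ω 0 = i}))
            (W ⁻¹' (σ i ⁻¹' B)) := by
      rw [Measure.map_apply hSm (hA i), Measure.restrict_apply (hSm (hA i)), Set.inter_comm]
    rw [this, hkey, Measure.smul_apply, smul_eq_mul, Measure.map_apply hW ((hσ i) hB)]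
  · intro a b hab
    have hdj : Disjoint {ω : ℕ → Fin N | ω 0 = a} {ω : ℕ → Fin N | ω 0 = b} := by
      rw [Set.disjoint_left]
      rintro ω (rfl : ω 0 = a) (hb : ω 0 = b)
      exact hab hb
    exact Disjoint.mono Set.inter_subset_left Set.inter_subset_left hdj
end

section
/- Let σ_1(x) = λ_1 x + b_1 and σ_2(x) = λ_2 x + b_2 be affine contractions (0 < λ_i < 1) mapping [0,1] into [0,1], let p_1, p_2 > 0 with p_1 + p_2 = 1, and let μ be a non-atomic Borel probability measure on [0,1] satisfying μ = p_1 μ∘σ_1^{-1} + p_2 μ∘σ_2^{-1}. Define f_0 : ℝ → ℝ by f_0(x) = 0 for x < 0, f_0(x) = x for 0 ≤ x ≤ 1, f_0(x) = 1 for x > 1, and recursively f_n(x) = p_1 f_{n-1}(σ_1^{-1}(x)) + p_2 f_{n-1}(σ_2^{-1}(x)) for n ≥ 1. Then for every x ∈ [0,1], lim_{n→∞} f_n(x) = g_μ(x), where g_μ(x) = μ([0,x]) is the cumulative distribution function of μ. -/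
open MeasureTheory Filter

private lemma affine_preimage_Icc (l b c d : ℝ) (hl : 0 < l) :
    (fun x => l * x + b) ⁻¹' Set.Icc c d = Set.Icc ((c - b) / l) ((d - b) / l) := by
  ext y
  simp only [Set.mem_preimage, Set.mem_Icc, div_le_iff₀ hl, le_div_iff₀ hl]
  constructor <;> rintro ⟨h1, h2⟩ <;> constructor <;> nlinarith

private noncomputable def Qf (p₁ p₂ l₁ b₁ l₂ b₂ : ℝ) : ℕ → ℝ → ℝ
  | 0 => fun x => if x ∈ Set.Icc (0:ℝ) 1 then 1 else 0
  | (n+1) => fun x =>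
      p₁ * Qf p₁ p₂ l₁ b₁ l₂ b₂ n ((x - b₁) / l₁) +
      p₂ * Qf p₁ p₂ l₁ b₁ l₂ b₂ n ((x - b₂) / l₂)

/-- Convergence of the iterative construction of the cumulative distribution function of
a two-map affine IFS measure: with `f₀` the truncated identity and
`fₙ(x) = p₁ f_{n−1}(σ₁⁻¹ x) + p₂ f_{n−1}(σ₂⁻¹ x)`, one has `fₙ(x) → g_μ(x) = μ([0,x])`
for every `x ∈ [0,1]`. -/
theorem stmt17 (l₁ l₂ b₁ b₂ : ℝ) (hl₁ : 0 < l₁) (hl₁' : l₁ < 1)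
    (hl₂ : 0 < l₂) (hl₂' : l₂ < 1)
    (hmap₁ : ∀ x ∈ Set.Icc (0:ℝ) 1, l₁ * x + b₁ ∈ Set.Icc (0:ℝ) 1)
    (hmap₂ : ∀ x ∈ Set.Icc (0:ℝ) 1, l₂ * x + b₂ ∈ Set.Icc (0:ℝ) 1)
    (p₁ p₂ : ℝ) (hp₁ : 0 < p₁) (hp₂ : 0 < p₂) (hpsum : p₁ + p₂ = 1)
    (μ : Measure ℝ) [IsProbabilityMeasure μ] [NullSingletonClass μ]
    (hsupp : μ (Set.Icc (0:ℝ) 1)ᶜ = 0)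
    (hIFS : μ = ENNReal.ofReal p₁ • Measure.map (fun x => l₁ * x + b₁) μ +
      ENNReal.ofReal p₂ • Measure.map (fun x => l₂ * x + b₂) μ)
    (f : ℕ → ℝ → ℝ)
    (hf0 : ∀ x : ℝ, f 0 x = if x < 0 then 0 else if x ≤ 1 then x else 1)
    (hfn : ∀ (n : ℕ) (x : ℝ),
      f (n + 1) x = p₁ * f n ((x - b₁) / l₁) + p₂ * f n ((x - b₂) / l₂)) :
    ∀ x ∈ Set.Icc (0:ℝ) 1,
      Tendsto (fun n => f n x) atTop (nhds ((μ (Set.Icc 0 x)).toReal)) := by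
  have hb₁ : 0 ≤ b₁ := by have := (hmap₁ 0 (by norm_num)).1; linarith
  have hb₂ : 0 ≤ b₂ := by have := (hmap₂ 0 (by norm_num)).1; linarith
  have hmeas₁ : Measurable (fun x : ℝ => l₁ * x + b₁) := by fun_prop
  have hmeas₂ : Measurable (fun x : ℝ => l₂ * x + b₂) := by fun_prop
  -- the IFS relation evaluated at measurable sets
  have key : ∀ s : Set ℝ, MeasurableSet s →
      μ s = ENNReal.ofReal p₁ * μ ((fun x => l₁ * x + b₁) ⁻¹' s) +
        ENNReal.ofReal p₂ * μ ((fun x => l₂ * x + b₂) ⁻¹' s) := by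
    intro s hs
    conv_lhs => rw [hIFS]
    rw [Measure.add_apply, Measure.smul_apply, Measure.smul_apply,
      Measure.map_apply hmeas₁ hs, Measure.map_apply hmeas₂ hs, smul_eq_mul, smul_eq_mul]
  have hnull : ∀ s : Set ℝ, s ⊆ (Set.Icc (0:ℝ) 1)ᶜ → μ s = 0 :=
    fun s hs => measure_mono_null hs hsupp
  have hIcc_shift : ∀ a c : ℝ, a ≤ 0 → μ (Set.Icc a c) = μ (Set.Icc 0 c) := by
    intro a c ha
    rcases le_or_gt 0 c with hc | hc
    · refine le_antisymm ?_ (measure_mono (Set.Icc_subset_Icc_left ha))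
      have h1 : Set.Icc a c ⊆ Set.Ico a 0 ∪ Set.Icc 0 c := by
        intro y hy
        rcases lt_or_ge y 0 with h | h
        · exact Or.inl ⟨hy.1, h⟩
        · exact Or.inr ⟨h, hy.2⟩
      calc μ (Set.Icc a c) ≤ μ (Set.Ico a 0 ∪ Set.Icc 0 c) := measure_mono h1
        _ ≤ μ (Set.Ico a 0) + μ (Set.Icc 0 c) := measure_union_le _ _
        _ = μ (Set.Icc 0 c) := by
            rw [hnull (Set.Ico a 0) (fun y hy => by
              simp only [Set.mem_compl_iff, Set.mem_Icc, not_and, not_le]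
              intro h; exact absurd h (not_le.mpr hy.2))]
            ring
    · rw [Set.Icc_eq_empty (by linarith : ¬ (0:ℝ) ≤ c), measure_empty]
      exact hnull _ (fun y hy => by
        simp only [Set.mem_compl_iff, Set.mem_Icc, not_and, not_le]
        intro h; exact absurd h (not_le.mpr (lt_of_le_of_lt hy.2 hc)))
  -- the CDF satisfies the same recursion
  have hg : ∀ x : ℝ, (μ (Set.Icc 0 x)).toReal =
      p₁ * (μ (Set.Icc 0 ((x - b₁) / l₁))).toReal +
      p₂ * (μ (Set.Icc 0 ((x - b₂) / l₂))).toReal := by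
    intro x
    have h := key (Set.Icc 0 x) measurableSet_Icc
    rw [affine_preimage_Icc l₁ b₁ 0 x hl₁, affine_preimage_Icc l₂ b₂ 0 x hl₂,
      hIcc_shift ((0 - b₁) / l₁) _ (div_nonpos_of_nonpos_of_nonneg (by linarith) hl₁.le),
      hIcc_shift ((0 - b₂) / l₂) _ (div_nonpos_of_nonpos_of_nonneg (by linarith) hl₂.le)] at h
    rw [h, ENNReal.toReal_add (ENNReal.mul_ne_top ENNReal.ofReal_ne_top (measure_ne_top μ _))
        (ENNReal.mul_ne_top ENNReal.ofReal_ne_top (measure_ne_top μ _)),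
      ENNReal.toReal_mul, ENNReal.toReal_mul, ENNReal.toReal_ofReal hp₁.le,
      ENNReal.toReal_ofReal hp₂.le]
  have hμ01 : μ (Set.Icc (0:ℝ) 1) = 1 := by
    have h := measure_compl (μ := μ) (measurableSet_Icc (a := (0:ℝ)) (b := 1))
      (measure_ne_top μ _)
    rw [hsupp, measure_univ] at h
    exact le_antisymm prob_le_one (tsub_eq_zero_iff_le.mp h.symm)
  -- Claim A : |f n x - g x| ≤ Q n x
  have hA : ∀ n (x : ℝ), |f n x - (μ (Set.Icc 0 x)).toReal| ≤ Qf p₁ p₂ l₁ b₁ l₂ b₂ n x := by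
    intro n
    induction n with
    | zero =>
      intro x
      rcases lt_or_ge x 0 with hx | hx
      · rw [hf0, if_pos hx, Set.Icc_eq_empty (by linarith : ¬ (0:ℝ) ≤ x), measure_empty]
        simp [Qf, Set.mem_Icc, not_le.mpr hx]
      · rcases le_or_gt x 1 with hx1 | hx1
        · rw [hf0, if_neg (not_lt.mpr hx), if_pos hx1]
          have h0 : (0:ℝ) ≤ (μ (Set.Icc 0 x)).toReal := ENNReal.toReal_nonneg
          have h1 : (μ (Set.Icc 0 x)).toReal ≤ 1 := by
            have := ENNReal.toReal_mono (by norm_num) (prob_le_one (μ := μ) (s := Set.Icc 0 x))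
            simpa using this
          have : Qf p₁ p₂ l₁ b₁ l₂ b₂ 0 x = 1 := by simp [Qf, Set.mem_Icc, hx, hx1]
          rw [this]
          exact abs_le.mpr ⟨by linarith, by linarith⟩
        · rw [hf0, if_neg (not_lt.mpr hx), if_neg (not_le.mpr hx1)]
          have hx' : μ (Set.Icc 0 x) = 1 :=
            le_antisymm prob_le_one
              (hμ01 ▸ measure_mono (Set.Icc_subset_Icc_right hx1.le))
          rw [hx']
          simp [Qf, Set.mem_Icc, not_le.mpr hx1]
    | succ n ih =>
      intro x
      rw [hfn, hg x]
      have hstep : Qf p₁ p₂ l₁ b₁ l₂ b₂ (n+1) x =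
          p₁ * Qf p₁ p₂ l₁ b₁ l₂ b₂ n ((x - b₁) / l₁) +
          p₂ * Qf p₁ p₂ l₁ b₁ l₂ b₂ n ((x - b₂) / l₂) := rfl
      rw [hstep]
      calc |p₁ * f n ((x - b₁) / l₁) + p₂ * f n ((x - b₂) / l₂) -
            (p₁ * (μ (Set.Icc 0 ((x - b₁) / l₁))).toReal +
             p₂ * (μ (Set.Icc 0 ((x - b₂) / l₂))).toReal)|
          = |p₁ * (f n ((x - b₁) / l₁) - (μ (Set.Icc 0 ((x - b₁) / l₁))).toReal) +
             p₂ * (f n ((x - b₂) / l₂) - (μ (Set.Icc 0 ((x - b₂) / l₂))).toReal)| := by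
            ring_nf
        _ ≤ |p₁ * (f n ((x - b₁) / l₁) - (μ (Set.Icc 0 ((x - b₁) / l₁))).toReal)| +
            |p₂ * (f n ((x - b₂) / l₂) - (μ (Set.Icc 0 ((x - b₂) / l₂))).toReal)| :=
            abs_add_le _ _
        _ = p₁ * |f n ((x - b₁) / l₁) - (μ (Set.Icc 0 ((x - b₁) / l₁))).toReal| +
            p₂ * |f n ((x - b₂) / l₂) - (μ (Set.Icc 0 ((x - b₂) / l₂))).toReal| := by
            rw [abs_mul, abs_mul, abs_of_pos hp₁, abs_of_pos hp₂]
        _ ≤ p₁ * Qf p₁ p₂ l₁ b₁ l₂ b₂ n ((x - b₁) / l₁) +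
            p₂ * Qf p₁ p₂ l₁ b₁ l₂ b₂ n ((x - b₂) / l₂) := by
            gcongr
            · exact ih _
            · exact ih _
  set lm : ℝ := max l₁ l₂ with hlm
  have hlm0 : 0 < lm := lt_max_of_lt_left hl₁
  have hlm1 : lm < 1 := max_lt hl₁' hl₂'
  -- Claim B : Q n x ≤ μ [x - lm^n, x + lm^n]
  have hB : ∀ n (x : ℝ), Qf p₁ p₂ l₁ b₁ l₂ b₂ n x ≤
      (μ (Set.Icc (x - lm ^ n) (x + lm ^ n))).toReal := by
    intro n
    induction n with
    | zero =>
      intro x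
      by_cases hx : x ∈ Set.Icc (0:ℝ) 1
      · have hsub : Set.Icc (0:ℝ) 1 ⊆ Set.Icc (x - lm ^ 0) (x + lm ^ 0) := by
          rw [pow_zero]
          exact Set.Icc_subset_Icc (by linarith [hx.2]) (by linarith [hx.1])
        have := ENNReal.toReal_mono (measure_ne_top μ _) (measure_mono hsub)
        rw [hμ01] at this
        simpa [Qf, hx] using this
      · simp only [Qf, if_neg hx]
        exact ENNReal.toReal_nonneg
    | succ n ih =>
      intro x
      have h := key (Set.Icc (x - lm ^ (n+1)) (x + lm ^ (n+1))) measurableSet_Icc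
      rw [affine_preimage_Icc l₁ b₁ _ _ hl₁, affine_preimage_Icc l₂ b₂ _ _ hl₂] at h
      have hlml₁ : l₁ * lm ^ n ≤ lm ^ (n+1) := by
        rw [pow_succ']
        exact mul_le_mul_of_nonneg_right (le_max_left _ _) (pow_nonneg hlm0.le n)
      have hlml₂ : l₂ * lm ^ n ≤ lm ^ (n+1) := by
        rw [pow_succ']
        exact mul_le_mul_of_nonneg_right (le_max_right _ _) (pow_nonneg hlm0.le n)
      have hsub₁ : Set.Icc ((x - b₁) / l₁ - lm ^ n) ((x - b₁) / l₁ + lm ^ n) ⊆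
          Set.Icc ((x - lm ^ (n+1) - b₁) / l₁) ((x + lm ^ (n+1) - b₁) / l₁) := by
        apply Set.Icc_subset_Icc
        · rw [div_le_iff₀ hl₁, sub_mul, div_mul_cancel₀ _ (ne_of_gt hl₁)]
          nlinarith
        · rw [le_div_iff₀ hl₁, add_mul, div_mul_cancel₀ _ (ne_of_gt hl₁)]
          nlinarith
      have hsub₂ : Set.Icc ((x - b₂) / l₂ - lm ^ n) ((x - b₂) / l₂ + lm ^ n) ⊆
          Set.Icc ((x - lm ^ (n+1) - b₂) / l₂) ((x + lm ^ (n+1) - b₂) / l₂) := by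
        apply Set.Icc_subset_Icc
        · rw [div_le_iff₀ hl₂, sub_mul, div_mul_cancel₀ _ (ne_of_gt hl₂)]
          nlinarith
        · rw [le_div_iff₀ hl₂, add_mul, div_mul_cancel₀ _ (ne_of_gt hl₂)]
          nlinarith
      have t₁ : Qf p₁ p₂ l₁ b₁ l₂ b₂ n ((x - b₁) / l₁) ≤
          (μ (Set.Icc ((x - lm ^ (n+1) - b₁) / l₁) ((x + lm ^ (n+1) - b₁) / l₁))).toReal :=
        (ih _).trans (ENNReal.toReal_mono (measure_ne_top μ _) (measure_mono hsub₁))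
      have t₂ : Qf p₁ p₂ l₁ b₁ l₂ b₂ n ((x - b₂) / l₂) ≤
          (μ (Set.Icc ((x - lm ^ (n+1) - b₂) / l₂) ((x + lm ^ (n+1) - b₂) / l₂))).toReal :=
        (ih _).trans (ENNReal.toReal_mono (measure_ne_top μ _) (measure_mono hsub₂))
      have htr : (μ (Set.Icc (x - lm ^ (n+1)) (x + lm ^ (n+1)))).toReal =
          p₁ * (μ (Set.Icc ((x - lm ^ (n+1) - b₁) / l₁) ((x + lm ^ (n+1) - b₁) / l₁))).toReal +
          p₂ * (μ (Set.Icc ((x - lm ^ (n+1) - b₂) / l₂) ((x + lm ^ (n+1) - b₂) / l₂))).toReal := by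
        rw [h, ENNReal.toReal_add (ENNReal.mul_ne_top ENNReal.ofReal_ne_top (measure_ne_top μ _))
            (ENNReal.mul_ne_top ENNReal.ofReal_ne_top (measure_ne_top μ _)),
          ENNReal.toReal_mul, ENNReal.toReal_mul, ENNReal.toReal_ofReal hp₁.le,
          ENNReal.toReal_ofReal hp₂.le]
      have hstep : Qf p₁ p₂ l₁ b₁ l₂ b₂ (n+1) x =
          p₁ * Qf p₁ p₂ l₁ b₁ l₂ b₂ n ((x - b₁) / l₁) +
          p₂ * Qf p₁ p₂ l₁ b₁ l₂ b₂ n ((x - b₂) / l₂) := rfl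
      rw [hstep, htr]
      gcongr
  -- the upper bound tends to zero
  intro x _
  have hpow : Tendsto (fun n => lm ^ n) atTop (nhds 0) :=
    tendsto_pow_atTop_nhds_zero_of_lt_one hlm0.le hlm1
  have hanti : Antitone (fun n => Set.Icc (x - lm ^ n) (x + lm ^ n)) := by
    intro m n hmn
    have hp : lm ^ n ≤ lm ^ m := pow_le_pow_of_le_one hlm0.le hlm1.le hmn
    exact Set.Icc_subset_Icc (by linarith) (by linarith)
  have hinter : (⋂ n, Set.Icc (x - lm ^ n) (x + lm ^ n)) = {x} := by
    ext y
    simp only [Set.mem_iInter, Set.mem_Icc, Set.mem_singleton_iff]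
    constructor
    · intro h
      have h1 : ∀ n, |y - x| ≤ lm ^ n := fun n =>
        abs_le.mpr ⟨by linarith [(h n).1], by linarith [(h n).2]⟩
      have h2 : |y - x| ≤ 0 := ge_of_tendsto hpow (Eventually.of_forall h1)
      have := abs_nonpos_iff.mp h2
      linarith [sub_eq_zero.mp this]
    · rintro rfl n
      have := pow_pos hlm0 n
      constructor <;> linarith
  have h1 : Tendsto (fun n => μ (Set.Icc (x - lm ^ n) (x + lm ^ n))) atTop (nhds (μ {x})) := by
    have := tendsto_measure_iInter_atTop (μ := μ)
      (s := fun n => Set.Icc (x - lm ^ n) (x + lm ^ n))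
      (fun n => measurableSet_Icc.nullMeasurableSet) hanti ⟨0, measure_ne_top μ _⟩
    rwa [hinter] at this
  have h2 : Tendsto (fun n => (μ (Set.Icc (x - lm ^ n) (x + lm ^ n))).toReal) atTop (nhds 0) := by
    have := (ENNReal.tendsto_toReal (a := μ {x}) (measure_ne_top μ _)).comp h1
    simpa [measure_singleton, Function.comp_def] using this
  have hsq : Tendsto (fun n => |f n x - (μ (Set.Icc 0 x)).toReal|) atTop (nhds 0) :=
    squeeze_zero (fun n => abs_nonneg _) (fun n => (hA n x).trans (hB n x)) h2
  rw [tendsto_iff_dist_tendsto_zero]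
  simpa [Real.dist_eq] using hsq
end

section
/- Let μ be a finite non-atomic Borel measure on [0,1] and let φ ∈ L¹(μ). Define f : [0,1] → ℝ by f(x) = ∫_0^x ( a + ∫_{[0,y]} φ dμ ) dy with a = −∫_{[0,1]} φ dμ (so that f(0) = 0 and the derivative f'(y) = a + ∫_{[0,y]} φ dμ satisfies f'(1) = 0). Then for every x ∈ [0,1], f(x) = −∫_{[0,1]} min(x, s) φ(s) dμ(s). In other words, the inverse of the Krein–Feller operator K_F = (d/dμ)(d/dx) with boundary conditions f(0) = f'(1) = 0 is the integral operator with kernel −min(x, s) against μ. -/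
open MeasureTheory

/-- The inverse of the Krein–Feller operator `K_F = (d/dμ)(d/dx)` with boundary
conditions `f(0) = f'(1) = 0` is the integral operator with kernel `−min(x,s)`:
for `φ ∈ L¹(μ)` and `f(x) = ∫_0^x (a + ∫_{[0,y]} φ dμ) dy` with
`a = −∫_{[0,1]} φ dμ`, one has `f(x) = −∫_{[0,1]} min(x,s) φ(s) dμ(s)` on `[0,1]`. -/
theorem stmt19 (μ : Measure ℝ) [IsFiniteMeasure μ] [NullSingletonClass μ]
    (hsupp : μ (Set.Icc (0:ℝ) 1)ᶜ = 0)
    (φ : ℝ → ℝ) (hφ : Integrable φ μ)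
    (a : ℝ) (ha : a = -∫ t in Set.Icc (0:ℝ) 1, φ t ∂μ)
    (f : ℝ → ℝ)
    (hf : ∀ x : ℝ, f x = ∫ y in (0:ℝ)..x, (a + ∫ t in Set.Icc 0 y, φ t ∂μ)) :
    ∀ x ∈ Set.Icc (0:ℝ) 1,
      f x = -∫ s in Set.Icc (0:ℝ) 1, min x s * φ s ∂μ := by
  intro x hx
  obtain ⟨hx0, hx1⟩ := hx
  set ν := volume.restrict (Set.Ioc (0:ℝ) x) with hν
  set μ' := μ.restrict (Set.Icc (0:ℝ) 1) with hμ'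
  have hSmeas : MeasurableSet {q : ℝ × ℝ | 0 ≤ q.2 ∧ q.2 ≤ q.1} :=
    (measurableSet_le measurable_const measurable_snd).inter
      (measurableSet_le measurable_snd measurable_fst)
  set F : ℝ → ℝ → ℝ := fun y t =>
    Set.indicator {q : ℝ × ℝ | 0 ≤ q.2 ∧ q.2 ≤ q.1} (fun q => φ q.2) (y, t) with hFdef
  have hφμ' : Integrable φ μ' := hφ.restrict
  have hφ2 : Integrable (fun q : ℝ × ℝ => φ q.2) (ν.prod μ') := by
    have := (integrable_const (1:ℝ) (μ := ν)).mul_prod hφμ'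
    simpa using this
  have hFint : Integrable (Function.uncurry F) (ν.prod μ') := by
    have : Function.uncurry F =
        Set.indicator {q : ℝ × ℝ | 0 ≤ q.2 ∧ q.2 ≤ q.1} (fun q => φ q.2) := by
      funext q; cases q; rfl
    rw [this]
    exact hφ2.indicator hSmeas
  -- inner integral in t
  have key1 : ∀ y ∈ Set.Ioc (0:ℝ) x, (∫ t, F y t ∂μ') = ∫ t in Set.Icc 0 y, φ t ∂μ := by
    intro y hy
    have h1 : (fun t => F y t) = Set.indicator (Set.Icc (0:ℝ) y) φ := by
      funext t
      by_cases h : t ∈ Set.Icc (0:ℝ) y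
      · rw [Set.indicator_of_mem h]
        exact Set.indicator_of_mem (by exact ⟨h.1, h.2⟩) _
      · rw [Set.indicator_of_notMem h]
        exact Set.indicator_of_notMem (fun hc => h ⟨hc.1, hc.2⟩) _
    rw [h1, integral_indicator measurableSet_Icc, hμ',
      Measure.restrict_restrict measurableSet_Icc,
      Set.inter_eq_left.mpr (Set.Icc_subset_Icc le_rfl (hy.2.trans hx1))]
  -- inner integral in y
  have key2 : ∀ t ∈ Set.Icc (0:ℝ) 1, (∫ y, F y t ∂ν) = (x - min x t) * φ t := by
    intro t ht
    have h1 : (fun y => F y t) = Set.indicator (Set.Ici t) (fun _ => φ t) := by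
      funext y
      by_cases h : t ≤ y
      · rw [Set.indicator_of_mem (Set.mem_Ici.mpr h)]
        exact Set.indicator_of_mem (show (y,t) ∈ {q : ℝ × ℝ | 0 ≤ q.2 ∧ q.2 ≤ q.1} from ⟨ht.1, h⟩) _
      · rw [Set.indicator_of_notMem (fun hc => h (Set.mem_Ici.mp hc))]
        exact Set.indicator_of_notMem (fun hc : (y,t) ∈ {q : ℝ × ℝ | 0 ≤ q.2 ∧ q.2 ≤ q.1} => h hc.2) _
    have h2 : (fun y => Set.indicator (Set.Ici t) (fun _ => φ t) y)
        =ᵐ[ν] (fun y => Set.indicator (Set.Ioi t) (fun _ => φ t) y) := by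
      have : ∀ᵐ y ∂ν, y ≠ t := by
        rw [hν, ae_restrict_iff' measurableSet_Ioc]
        have : volume ({t} : Set ℝ) = 0 := measure_singleton t
        filter_upwards [measure_eq_zero_iff_ae_notMem.mp this] with y hy _
        exact hy
      filter_upwards [this] with y hy
      by_cases h : t < y
      · rw [Set.indicator_of_mem (Set.mem_Ioi.mpr h),
          Set.indicator_of_mem (Set.mem_Ici.mpr (le_of_lt h))]
      · rw [Set.indicator_of_notMem (fun hc => h (Set.mem_Ioi.mp hc)),
          Set.indicator_of_notMem
            (fun hc => h (lt_of_le_of_ne (Set.mem_Ici.mp hc) (Ne.symm hy)))]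
    rw [h1, integral_congr_ae h2, integral_indicator measurableSet_Ioi, hν,
      Measure.restrict_restrict measurableSet_Ioi]
    have h3 : Set.Ioi t ∩ Set.Ioc 0 x = Set.Ioc t x := by
      rw [Set.inter_comm, Set.Ioc_inter_Ioi, sup_eq_right.mpr ht.1]
    rw [h3, setIntegral_const, measureReal_def, Real.volume_Ioc, smul_eq_mul]
    congr 1
    rcases le_total t x with h | h
    · rw [min_eq_right h, ENNReal.toReal_ofReal (by linarith)]
    · rw [min_eq_left h, ENNReal.ofReal_of_nonpos (by linarith), ENNReal.toReal_zero]
      ring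
  -- integrability of the inner integral
  have hg : Integrable (fun y => ∫ t in Set.Icc 0 y, φ t ∂μ) ν := by
    refine (hFint.integral_prod_left).congr ?_
    filter_upwards [ae_restrict_mem measurableSet_Ioc] with y hy
    exact key1 y hy
  have fubini := integral_integral_swap hFint
  have hmin : Integrable (fun t => min x t * φ t) μ' := by
    refine Integrable.mono' hφμ'.norm
      ((continuous_const.min continuous_id).aestronglyMeasurable.mul
        hφμ'.aestronglyMeasurable) ?_
    filter_upwards [ae_restrict_mem measurableSet_Icc] with t ht
    rw [norm_mul]
    refine mul_le_of_le_one_left (norm_nonneg _) ?_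
    rw [Real.norm_eq_abs, abs_le]
    constructor
    · have : (0:ℝ) ≤ min x t := le_min hx0 ht.1
      linarith
    · exact le_trans (min_le_min hx1 ht.2) (by norm_num)
  have step1 : f x = a * x + ∫ y, (∫ t, F y t ∂μ') ∂ν := by
    rw [hf x, intervalIntegral.integral_of_le hx0]
    have : ∫ y in Set.Ioc (0:ℝ) x, (a + ∫ t in Set.Icc 0 y, φ t ∂μ)
        = ∫ y, (a + ∫ t in Set.Icc 0 y, φ t ∂μ) ∂ν := rfl
    rw [this, integral_add (integrable_const a) hg]
    congr 1
    · rw [integral_const, measureReal_def, Measure.restrict_apply_univ, Real.volume_Ioc, smul_eq_mul,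
        ENNReal.toReal_ofReal (by linarith), sub_zero, mul_comm]
    · symm
      refine integral_congr_ae ?_
      filter_upwards [ae_restrict_mem measurableSet_Ioc] with y hy
      exact key1 y hy
  have step2 : ∫ t, (∫ y, F y t ∂ν) ∂μ' = ∫ t, (x - min x t) * φ t ∂μ' := by
    refine integral_congr_ae ?_
    filter_upwards [ae_restrict_mem measurableSet_Icc] with t ht
    exact key2 t ht
  have step3 : ∫ t, (x - min x t) * φ t ∂μ'
      = x * (∫ t, φ t ∂μ') - ∫ t, min x t * φ t ∂μ' := by
    have h1 : (fun t => (x - min x t) * φ t)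
        = fun t => x * φ t - min x t * φ t := by funext t; ring
    rw [h1, integral_sub (hφμ'.const_mul x) hmin, MeasureTheory.integral_const_mul]
  rw [step1, fubini, step2, step3, ha]
  ring
end
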